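/- arXiv:1203.2460 — 7 statements merged into one kernel-verified Lean document; each statement's English description precedes it below -/
import Mathlib

section
/- If D is a pushout A ∪_B C in the category of small categories and X : D → E is a diagram in a cocomplete category E, then the square of colimits colim_B X → colim_A X, colim_B X → colim_C X, colim_A X → colim_D X, colim_C X → colim_D X is a pushout in E. -/
/-!
A map out of `colimit X` is a family of maps `X d ⟶ T` natural in `d`. Since `D = A ⊔_B C` in
`Cat`, its objects form the quotient of `A ⊕ C` identifying `F b` with `G b` (test the pushout
against codiscrete categories), and its morphisms are generated by those of `A` and `C` (test it
against wide subcategories). Hence natural families on `A` and on `C` that agree over `B` glue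
uniquely to a natural family on `D`, which is the universal property of the square of colimits.
-/

universe w v u

open CategoryTheory Limits

namespace CategoryTheory.Cat

variable {K K' : Cat.{u, u}} {S : Type u}

/-- Mathlib's `Codiscrete S` has hom types in `Type`; `ULiftHom` makes it an object of
`Cat.{u, u}`. -/
def codiscrete (S : Type u) : Cat.{u, u} := Cat.of (ULiftHom.{u} (Codiscrete S))

def toCodiscreteEquiv : (K → S) ≃ (K ⟶ codiscrete S) where
  toFun φ := (Codiscrete.functor φ ⋙ ULiftHom.up).toCatHom
  invFun L k := (ULiftHom.objDown.{u, u} (L.toFunctor.obj k)).as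
  left_inv _ := rfl
  right_inv _ := Hom.ext (Functor.ext (fun _ => rfl) fun _ _ _ => rfl)

lemma comp_toCodiscreteEquiv (H : K' ⟶ K) (φ : K → S) :
    H ≫ toCodiscreteEquiv φ = toCodiscreteEquiv (φ ∘ H.toFunctor.obj) := rfl

lemma toCodiscreteEquiv_symm_comp (H : K' ⟶ K) (L : K ⟶ codiscrete S) :
    toCodiscreteEquiv.symm (H ≫ L) = toCodiscreteEquiv.symm L ∘ H.toFunctor.obj := rfl

end CategoryTheory.Cat

lemma CategoryTheory.Limits.colimit.ι_comp_eqToHom {J E : Type*} [Category J] [Category E]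
    [HasColimitsOfShape J E] {K K' : J ⥤ E} (h : K = K') (j : J) :
    colimit.ι K j ≫ eqToHom (congrArg (fun L => colimit L) h) =
      eqToHom (Functor.congr_obj h j) ≫ colimit.ι K' j := by
  subst h
  simp

lemma Sigma.eqToHom_comp_snd_eq {E : Type*} [Category E] {T : E} {p : Σ e : E, e ⟶ T}
    {e : E} {φ : e ⟶ T} (hp : p = ⟨e, φ⟩) (h : e = p.1) : eqToHom h ≫ p.2 = φ := by
  subst hp; simp

lemma Sigma.mk_eq_mk_of_eq_eqToHom_comp {E : Type*} [Category E] {T e e' : E} (h : e = e')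
    {φ : e ⟶ T} {φ' : e' ⟶ T} (hφ : φ = eqToHom h ≫ φ') :
    (⟨e, φ⟩ : Σ e : E, e ⟶ T) = ⟨e', φ'⟩ := by
  subst h; simp_all

namespace CategoryTheory.MorphismProperty

variable {D K : Type*} [Category D] [Category K] {R R' : D ⥤ K}

def naturality (app : ∀ d, R.obj d ⟶ R'.obj d) : MorphismProperty D :=
  fun d d' f => R.map f ≫ app d' = app d ≫ R'.map f

instance (app : ∀ d, R.obj d ⟶ R'.obj d) : (naturality app).IsMultiplicative where
  id_mem d := by simp [naturality]
  comp_mem f g hf hg := by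
    change R.map f ≫ _ = _ at hf
    change R.map (f ≫ g) ≫ _ = _ ≫ R'.map (f ≫ g)
    rw [R.map_comp, R'.map_comp, Category.assoc, hg, reassoc_of% hf]

end CategoryTheory.MorphismProperty

theorem CategoryTheory.IsPushout.of_exists_desc {C : Type*} [Category C] {Z X Y P : C}
    {f : Z ⟶ X} {g : Z ⟶ Y} {inl : X ⟶ P} {inr : Y ⟶ P} (w : CommSq f g inl inr)
    (desc : ∀ {T : C} (h : X ⟶ T) (k : Y ⟶ T), f ≫ h = g ≫ k →
      ∃ m : P ⟶ T, inl ≫ m = h ∧ inr ≫ m = k)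
    (hom_ext : ∀ {T : C} {m m' : P ⟶ T},
      inl ≫ m = inl ≫ m' → inr ≫ m = inr ≫ m' → m = m') :
    IsPushout f g inl inr :=
  IsPushout.of_isColimit <| PushoutCocone.IsColimit.mk w.w
    (fun s => (desc s.inl s.inr s.condition).choose)
    (fun s => (desc s.inl s.inr s.condition).choose_spec.1)
    (fun s => (desc s.inl s.inr s.condition).choose_spec.2)
    fun s _ hl hr => hom_ext (hl.trans (desc s.inl s.inr s.condition).choose_spec.1.symm)
      (hr.trans (desc s.inl s.inr s.condition).choose_spec.2.symm)

namespace CategoryTheory.CommSq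

lemma cat_obj_eq {A B C D : Cat.{u, u}} {F : B ⟶ A} {G : B ⟶ C} {iA : A ⟶ D} {iC : C ⟶ D}
    (h : CommSq F G iA iC) (b : B) :
    iA.toFunctor.obj (F.toFunctor.obj b) = iC.toFunctor.obj (G.toFunctor.obj b) :=
  Functor.congr_obj (congrArg Cat.Hom.toFunctor h.w) b

end CategoryTheory.CommSq

namespace CategoryTheory.IsPushout

variable {A B C D : Cat.{u, u}} {F : B ⟶ A} {G : B ⟶ C} {iA : A ⟶ D} {iC : C ⟶ D}

open Cat in
theorem cat_funext (hpo : IsPushout F G iA iC) {S : Type u} {f g : D → S}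
    (hA : ∀ a, f (iA.toFunctor.obj a) = g (iA.toFunctor.obj a))
    (hC : ∀ c, f (iC.toFunctor.obj c) = g (iC.toFunctor.obj c)) : f = g :=
  toCodiscreteEquiv.injective <| hpo.hom_ext
    (by rw [comp_toCodiscreteEquiv, comp_toCodiscreteEquiv]; exact congrArg _ (funext hA))
    (by rw [comp_toCodiscreteEquiv, comp_toCodiscreteEquiv]; exact congrArg _ (funext hC))

theorem cat_obj_cases (hpo : IsPushout F G iA iC) (d : D) :
    (∃ a, iA.toFunctor.obj a = d) ∨ ∃ c, iC.toFunctor.obj c = d := by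
  have key := hpo.cat_funext
    (f := fun d => ULift.up.{u} ((∃ a, iA.toFunctor.obj a = d) ∨ ∃ c, iC.toFunctor.obj c = d))
    (g := fun _ => ULift.up True)
    (fun a => by simp) (fun c => by simp)
  simpa using congrFun key d

open Cat in
theorem cat_exists_obj_desc (hpo : IsPushout F G iA iC) {S : Type*} (pA : A → S) (pC : C → S)
    (h : ∀ b, pA (F.toFunctor.obj b) = pC (G.toFunctor.obj b)) :
    ∃ r : D → S,
      (∀ a, r (iA.toFunctor.obj a) = pA a) ∧ ∀ c, r (iC.toFunctor.obj c) = pC c := by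
  let rel (x y : A ⊕ C) : Prop :=
    ∃ b, x = .inl (F.toFunctor.obj b) ∧ y = .inr (G.toFunctor.obj b)
  let πA : A ⟶ codiscrete (Quot rel) := toCodiscreteEquiv (Quot.mk _ ∘ .inl)
  let πC : C ⟶ codiscrete (Quot rel) := toCodiscreteEquiv (Quot.mk _ ∘ .inr)
  have hw : F ≫ πA = G ≫ πC := by
    rw [comp_toCodiscreteEquiv, comp_toCodiscreteEquiv]
    exact congrArg _ (funext fun b => Quot.sound ⟨b, rfl, rfl⟩)
  let π := toCodiscreteEquiv.symm (hpo.desc πA πC hw)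
  have hπA : π ∘ iA.toFunctor.obj = Quot.mk _ ∘ .inl := by
    rw [← toCodiscreteEquiv_symm_comp, hpo.inl_desc, Equiv.symm_apply_apply]
  have hπC : π ∘ iC.toFunctor.obj = Quot.mk _ ∘ .inr := by
    rw [← toCodiscreteEquiv_symm_comp, hpo.inr_desc, Equiv.symm_apply_apply]
  let lift : Quot rel → S :=
    Quot.lift (Sum.elim pA pC) (by rintro _ _ ⟨b, rfl, rfl⟩; exact h b)
  exact ⟨lift ∘ π, fun a => congrArg lift (congrFun hπA a),
    fun c => congrArg lift (congrFun hπC c)⟩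

theorem cat_morphismProperty_eq_top (hpo : IsPushout F G iA iC) (P : MorphismProperty D)
    [P.IsMultiplicative] (hA : ∀ {a a'} (f : a ⟶ a'), P (iA.toFunctor.map f))
    (hC : ∀ {c c'} (f : c ⟶ c'), P (iC.toFunctor.map f)) : P = ⊤ := by
  let jA : A ⥤ WideSubcategory P :=
    { obj a := ⟨iA.toFunctor.obj a⟩
      map f := ⟨iA.toFunctor.map f, hA f⟩ }
  let jC : C ⥤ WideSubcategory P :=
    { obj c := ⟨iC.toFunctor.obj c⟩
      map f := ⟨iC.toFunctor.map f, hC f⟩ }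
  have hw : F.toFunctor ⋙ jA = G.toFunctor ⋙ jC := by
    refine Functor.ext (fun b => congrArg WideSubcategory.mk ?_) fun b b' g => ?_
    · exact hpo.toCommSq.cat_obj_eq b
    · apply (wideSubcategoryInclusion P).map_injective
      simp only [Functor.map_comp, eqToHom_map]
      exact Functor.congr_hom (congrArg Cat.Hom.toFunctor hpo.w) g
  let L := hpo.desc jA.toCatHom jC.toCatHom (congrArg Functor.toCatHom hw)
  let ι : Cat.of (WideSubcategory P) ⟶ D := (wideSubcategoryInclusion P).toCatHom
  have hsection : L ≫ ι = 𝟙 D :=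
    hpo.hom_ext (by rw [← Category.assoc, show iA ≫ L = _ from hpo.inl_desc _ _ _]; rfl)
      (by rw [← Category.assoc, show iC ≫ L = _ from hpo.inr_desc _ _ _]; rfl)
  ext d d' f
  simp only [MorphismProperty.top_apply, iff_true]
  exact P.of_eq (L.toFunctor.map f).2
    (Functor.congr_obj (congrArg Cat.Hom.toFunctor hsection) d)
    (Functor.congr_obj (congrArg Cat.Hom.toFunctor hsection) d')
    (Functor.congr_hom (congrArg Cat.Hom.toFunctor hsection.symm) f)

theorem cat_naturality (hpo : IsPushout F G iA iC) {K : Type*} [Category K] {R R' : D ⥤ K}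
    (app : ∀ d, R.obj d ⟶ R'.obj d)
    (hA : ∀ {a a'} (f : a ⟶ a'), MorphismProperty.naturality app (iA.toFunctor.map f))
    (hC : ∀ {c c'} (f : c ⟶ c'), MorphismProperty.naturality app (iC.toFunctor.map f))
    {d d' : D} (f : d ⟶ d') : R.map f ≫ app d' = app d ≫ R'.map f :=
  (hpo.cat_morphismProperty_eq_top (MorphismProperty.naturality app) hA hC).ge f trivial

theorem cat_exists_natTrans_glue (hpo : IsPushout F G iA iC) {E : Type*} [Category E] (X : D ⥤ E)
    {T : E} (α : iA.toFunctor ⋙ X ⟶ (Functor.const A).obj T)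
    (β : iC.toFunctor ⋙ X ⟶ (Functor.const C).obj T)
    (hαβ : ∀ b, α.app (F.toFunctor.obj b) =
      eqToHom (congrArg X.obj (hpo.toCommSq.cat_obj_eq b)) ≫ β.app (G.toFunctor.obj b)) :
    ∃ γ : X ⟶ (Functor.const D).obj T,
      Functor.whiskerLeft iA.toFunctor γ = α ∧ Functor.whiskerLeft iC.toFunctor γ = β := by
  obtain ⟨r, hrA, hrC⟩ := hpo.cat_exists_obj_desc (S := Σ e : E, e ⟶ T)
    (fun a => ⟨_, α.app a⟩) (fun c => ⟨_, β.app c⟩)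
    (fun b => Sigma.mk_eq_mk_of_eq_eqToHom_comp _ (hαβ b))
  have hfst (d : D) : X.obj d = (r d).1 := by
    rcases hpo.cat_obj_cases d with ⟨a, rfl⟩ | ⟨c, rfl⟩
    · rw [hrA]; rfl
    · rw [hrC]; rfl
  let ℓ (d : D) : X.obj d ⟶ T := eqToHom (hfst d) ≫ (r d).2
  have hℓA (a : A) : ℓ (iA.toFunctor.obj a) = α.app a := Sigma.eqToHom_comp_snd_eq (hrA a) _
  have hℓC (c : C) : ℓ (iC.toFunctor.obj c) = β.app c := Sigma.eqToHom_comp_snd_eq (hrC c) _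
  have hnat {d d' : D} (f : d ⟶ d') := hpo.cat_naturality (R' := (Functor.const D).obj T) ℓ
    (fun f => by simpa [MorphismProperty.naturality, hℓA] using α.naturality f)
    (fun f => by simpa [MorphismProperty.naturality, hℓC] using β.naturality f) f
  refine ⟨{ app := ℓ, naturality := fun _ _ f => hnat f }, ?_, ?_⟩
  · ext a
    exact hℓA a
  · ext c
    exact hℓC c

section colimit

variable {E : Type*} [Category E] [HasColimitsOfSize.{u, u} E] (X : D ⥤ E)

theorem cat_colimit_hom_ext (hpo : IsPushout F G iA iC) {T : E} {m m' : colimit X ⟶ T}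
    (hA : colimit.pre X iA.toFunctor ≫ m = colimit.pre X iA.toFunctor ≫ m')
    (hC : colimit.pre X iC.toFunctor ≫ m = colimit.pre X iC.toFunctor ≫ m') : m = m' := by
  refine colimit.hom_ext fun d => ?_
  rcases hpo.cat_obj_cases d with ⟨a, rfl⟩ | ⟨c, rfl⟩
  · simpa using colimit.ι _ a ≫= hA
  · simpa using colimit.ι _ c ≫= hC

theorem _root_.CategoryTheory.CommSq.cat_colimit_pre (hsq : CommSq F G iA iC)
    (hcomm : F.toFunctor ⋙ iA.toFunctor ⋙ X = G.toFunctor ⋙ iC.toFunctor ⋙ X) :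
    CommSq (colimit.pre (iA.toFunctor ⋙ X) F.toFunctor)
      (eqToHom (congrArg (fun K => colimit K) hcomm) ≫
        colimit.pre (iC.toFunctor ⋙ X) G.toFunctor)
      (colimit.pre X iA.toFunctor) (colimit.pre X iC.toFunctor) := by
  refine ⟨colimit.hom_ext fun b => ?_⟩
  simp only [colimit.ι_pre_assoc, Category.assoc, reassoc_of% colimit.ι_comp_eqToHom hcomm b,
    colimit.ι_pre]
  exact (colimit.eqToHom_comp_ι X (hsq.cat_obj_eq b).symm).symm

theorem cat_exists_colimit_desc (hpo : IsPushout F G iA iC)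
    (hcomm : F.toFunctor ⋙ iA.toFunctor ⋙ X = G.toFunctor ⋙ iC.toFunctor ⋙ X) {T : E}
    (h : colimit (iA.toFunctor ⋙ X) ⟶ T) (k : colimit (iC.toFunctor ⋙ X) ⟶ T)
    (hcond : colimit.pre (iA.toFunctor ⋙ X) F.toFunctor ≫ h =
      (eqToHom (congrArg (fun K => colimit K) hcomm) ≫
        colimit.pre (iC.toFunctor ⋙ X) G.toFunctor) ≫ k) :
    ∃ m : colimit X ⟶ T,
      colimit.pre X iA.toFunctor ≫ m = h ∧ colimit.pre X iC.toFunctor ≫ m = k := by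
  obtain ⟨γ, hγA, hγC⟩ := hpo.cat_exists_natTrans_glue X
    ((colimit.cocone _).ι ≫ (Functor.const A).map h)
    ((colimit.cocone _).ι ≫ (Functor.const C).map k)
    fun b => by
      simpa [reassoc_of% colimit.ι_comp_eqToHom hcomm b] using colimit.ι _ b ≫= hcond
  refine ⟨colimit.desc X ⟨T, γ⟩, colimit.hom_ext fun a => ?_, colimit.hom_ext fun c => ?_⟩
  · simpa using congrArg (fun γ => γ.app a) hγA
  · simpa using congrArg (fun γ => γ.app c) hγC

end colimit

end CategoryTheory.IsPushout

/-- If `D` is a pushout `A ∪_B C` in the category `Cat` of small categories and `X : D ⥤ E`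
is a diagram in a cocomplete category `E`, then the square of colimits
`colim_B X → colim_A X`, `colim_B X → colim_C X`, `colim_A X → colim_D X`,
`colim_C X → colim_D X` (of the restrictions of `X` along the canonical functors into `D`)
is a pushout in `E`. -/
theorem colimit_isPushout_of_cat_isPushout {A B C D : Cat.{u, u}}
    (F : B ⟶ A) (G : B ⟶ C) (iA : A ⟶ D) (iC : C ⟶ D)
    (hpo : IsPushout F G iA iC)
    {E : Type w} [Category.{v} E] [HasColimitsOfSize.{u, u} E] (X : D ⥤ E)
    (hcomm : (F.toFunctor ⋙ iA.toFunctor ⋙ X : B ⥤ E) = (G.toFunctor ⋙ iC.toFunctor ⋙ X : B ⥤ E)) :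
    IsPushout
      (colimit.pre (iA.toFunctor ⋙ X) F.toFunctor)
      (eqToHom (congrArg (fun (K : B ⥤ E) => colimit K) hcomm) ≫ colimit.pre (iC.toFunctor ⋙ X) G.toFunctor)
      (colimit.pre X iA.toFunctor)
      (colimit.pre X iC.toFunctor) :=
  IsPushout.of_exists_desc (hpo.toCommSq.cat_colimit_pre X hcomm)
    (hpo.cat_exists_colimit_desc X hcomm) (hpo.cat_colimit_hom_ext X)
end

section
/- Let X be a topological space and A₁, A₂ ⊆ X closed subsets such that (X, A₁), (X, A₂), and (X, A₁ ∩ A₂) are NDR pairs (equivalently, the inclusions are closed Hurewicz cofibrations). Then (X, A₁ ∪ A₂) is an NDR pair, i.e. the inclusion A₁ ∪ A₂ → X is a closed Hurewicz cofibration. -/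
/-!
By Strøm, a closed `A ⊆ X` is an NDR pair iff `X × 0 ∪ A × I` is a retract of `X × I`. Put
`C = A₁ ∩ A₂` and `D = C × I ∪ A₁ × 0 ∪ A₂ × 1 ⊆ X × I`. By the product theorem for NDR pairs,
`E = C × I ∪ X × ∂I` is an NDR subspace of `X × I`, and `D` is an NDR subspace of `E` (deform
with the homotopy of `A₁` near `0` and that of `A₂` near `1`); composing, `D ⊆ X × I` is an NDR
pair. Finally `A₁ ∪ A₂ ⊆ X` is a retract of `D ⊆ X × I` through `x ↦ (x, u₁ x / (u₁ x + u₂ x))`.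
This section is discontinuous on `C` only, and there the retraction of `X × I × I` is stationary
in the cylinder coordinate, so by the tube lemma the retraction it induces on `X × I` is continuous.
-/

open Set Filter Topology unitInterval

/-- `(X, A)` is an NDR pair: `A` is closed in `X` and there are a map `u : X → [0,1]`
with `A = u⁻¹(0)` and a homotopy `h : X × [0,1] → X` with `h₀ = id`, `hₜ|_A = id` for all `t`,
and `h₁(x) ∈ A` whenever `u(x) < 1`. -/
def IsNDRPair {X : Type*} [TopologicalSpace X] (A : Set X) : Prop :=
  IsClosed A ∧
  ∃ (u : C(X, ℝ)) (h : C(X × unitInterval, X)),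
    (∀ x, u x ∈ Set.Icc (0 : ℝ) 1) ∧
    (A = u ⁻¹' {0}) ∧
    (∀ x, h (x, 0) = x) ∧
    (∀ a ∈ A, ∀ t, h (a, t) = a) ∧
    (∀ x, u x < 1 → h (x, 1) ∈ A)

local notation "clampI" => Set.projIcc (0 : ℝ) 1 zero_le_one

theorem continuousAt_apply_of_forall_eq {Y K Z W : Type*} [TopologicalSpace Y]
    [TopologicalSpace K] [CompactSpace K] [TopologicalSpace Z] [TopologicalSpace W]
    {F : Y × K → W} (hF : Continuous F) {y₀ : Y} {w₀ : W} (hy₀ : ∀ k, F (y₀, k) = w₀)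
    {f : Z → Y} {z₀ : Z} (hf : ContinuousAt f z₀) (hfz : f z₀ = y₀) (g : Z → K) :
    ContinuousAt (fun z => F (f z, g z)) z₀ := by
  intro U (hU : U ∈ 𝓝 (F (f z₀, g z₀)))
  rw [hfz, hy₀] at hU
  have hnear : ∀ k ∈ univ, ∀ᶠ p : Y × K in 𝓝 (y₀, k), F p ∈ U := fun k _ =>
    hF.continuousAt.preimage_mem_nhds (by rwa [hy₀])
  have htube := isCompact_univ.eventually_forall_of_forall_eventually
    (P := fun y k => F (y, k) ∈ U) hnear
  rw [← hfz] at htube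
  exact (hf.eventually htube).mono fun z hz => hz (g z) trivial

def doubleMappingCylinder {X : Type*} (A₁ A₂ : Set X) : Set (X × I) :=
  (A₁ ∩ A₂) ×ˢ univ ∪ (A₁ ×ˢ {0} ∪ A₂ ×ˢ {1})

theorem mem_doubleMappingCylinder {X : Type*} {A₁ A₂ : Set X} {p : X × I} :
    p ∈ doubleMappingCylinder A₁ A₂ ↔
      p.1 ∈ A₁ ∧ p.1 ∈ A₂ ∨ p.1 ∈ A₁ ∧ p.2 = 0 ∨ p.1 ∈ A₂ ∧ p.2 = 1 := by
  simp [doubleMappingCylinder]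

section NDR

variable {X : Type*} [TopologicalSpace X]

structure IsNDRRep (A : Set X) (u : C(X, ℝ)) (h : C(X × I, X)) : Prop where
  mem_Icc : ∀ x, u x ∈ Icc (0 : ℝ) 1
  eq_preimage_zero : A = u ⁻¹' {0}
  apply_zero : ∀ x, h (x, 0) = x
  apply_of_mem : ∀ a ∈ A, ∀ t, h (a, t) = a
  apply_one_mem : ∀ x, u x < 1 → h (x, 1) ∈ A

structure IsStromRetraction (A : Set X) (r : C(X × I, X × I)) : Prop where
  apply_zero : ∀ x, r (x, 0) = (x, 0)
  apply_of_mem : ∀ a ∈ A, ∀ t, r (a, t) = (a, t)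
  snd_eq_zero_or_fst_mem : ∀ p, (r p).2 = 0 ∨ (r p).1 ∈ A

theorem isNDRPair_iff {A : Set X} : IsNDRPair A ↔ IsClosed A ∧ ∃ u h, IsNDRRep A u h :=
  ⟨fun ⟨hA, u, h, h₁, h₂, h₃, h₄, h₅⟩ => ⟨hA, u, h, ⟨h₁, h₂, h₃, h₄, h₅⟩⟩,
    fun ⟨hA, u, h, ⟨h₁, h₂, h₃, h₄, h₅⟩⟩ => ⟨hA, u, h, h₁, h₂, h₃, h₄, h₅⟩⟩

namespace IsNDRRep

variable {A : Set X} {u : C(X, ℝ)} {h : C(X × I, X)}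

theorem apply_eq_zero_iff (hA : IsNDRRep A u h) {x : X} : u x = 0 ↔ x ∈ A := by
  rw [hA.eq_preimage_zero]; rfl

theorem isClosed (hA : IsNDRRep A u h) : IsClosed A :=
  hA.eq_preimage_zero ▸ isClosed_singleton.preimage u.continuous

theorem continuous_apply_projIcc_div {Z : Type*} [TopologicalSpace Z] (hA : IsNDRRep A u h)
    {f : Z → X} (hf : Continuous f) {w : Z → ℝ} (hw : Continuous w) :
    Continuous fun z => h (f z, clampI (w z / u (f z))) := by
  refine continuous_iff_continuousAt.2 fun z => ?_
  by_cases hz : u (f z) = 0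
  · exact continuousAt_apply_of_forall_eq h.continuous
      (hA.apply_of_mem _ (hA.apply_eq_zero_iff.1 hz)) hf.continuousAt rfl _
  · exact h.continuous.continuousAt.comp <| hf.continuousAt.prodMk <|
      continuous_projIcc.continuousAt.comp <|
        hw.continuousAt.div (u.continuous.comp hf).continuousAt hz

theorem apply_projIcc_div_mem (hA : IsNDRRep A u h) {x : X} {w : ℝ} (hxw : u x ≤ w)
    (hx : u x < 1) : h (x, clampI (w / u x)) ∈ A := by
  rcases (hA.mem_Icc x).1.eq_or_lt with hx0 | hx0
  · rw [hA.apply_of_mem x (hA.apply_eq_zero_iff.1 hx0.symm)]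
    exact hA.apply_eq_zero_iff.1 hx0.symm
  · rw [projIcc_eq_one.2 ((one_le_div hx0).2 hxw)]
    exact hA.apply_one_mem x hx

theorem prod {Y : Type*} [TopologicalSpace Y] {B : Set Y} {v : C(Y, ℝ)} {k : C(Y × I, Y)}
    (hA : IsNDRRep A u h) (hB : IsNDRRep B v k) :
    ∃ w H, IsNDRRep (A ×ˢ univ ∪ univ ×ˢ B) w H := by
  refine ⟨⟨fun p => u p.1 * v p.2, by fun_prop⟩,
    ⟨fun q => (h (q.1.1, clampI (q.2 * v q.1.2 / u q.1.1)),
      k (q.1.2, clampI (q.2 * u q.1.1 / v q.1.2))),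
    (hA.continuous_apply_projIcc_div (by fun_prop) (by fun_prop)).prodMk
      (hB.continuous_apply_projIcc_div (by fun_prop) (by fun_prop))⟩,
    ⟨fun ⟨x, y⟩ => ?_, ?_, fun ⟨x, y⟩ => ?_, ?_, fun ⟨x, y⟩ hxy => ?_⟩⟩
  · obtain ⟨hu₀, hu₁⟩ := hA.mem_Icc x
    obtain ⟨hv₀, hv₁⟩ := hB.mem_Icc y
    exact ⟨mul_nonneg hu₀ hv₀, mul_le_one₀ hu₁ hv₀ hv₁⟩
  · ext ⟨x, y⟩
    simp [hA.apply_eq_zero_iff, hB.apply_eq_zero_iff]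
  · simp [hA.apply_zero, hB.apply_zero]
  · rintro ⟨x, y⟩ (⟨hx, -⟩ | ⟨-, hy⟩) t
    · simp [hA.apply_of_mem x hx, hA.apply_eq_zero_iff.2 hx, hB.apply_zero]
    · simp [hB.apply_of_mem y hy, hB.apply_eq_zero_iff.2 hy, hA.apply_zero]
  · simp only [ContinuousMap.coe_mk, Icc.coe_one, one_mul] at hxy ⊢
    have hu₀ := (hA.mem_Icc x).1
    have hv₀ := (hB.mem_Icc y).1
    rcases le_total (u x) (v y) with hle | hle
    · exact Or.inl ⟨hA.apply_projIcc_div_mem hle (by nlinarith), trivial⟩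
    · exact Or.inr ⟨trivial, hB.apply_projIcc_div_mem hle (by nlinarith)⟩

theorem exists_isNDRRep_subtype_doubleMappingCylinder {A₁ A₂ : Set X} {u₁ u₂ : C(X, ℝ)}
    {k₁ k₂ : C(X × I, X)} (h₁ : IsNDRRep A₁ u₁ k₁) (h₂ : IsNDRRep A₂ u₂ k₂) :
    ∃ u h, IsNDRRep (X := ↥((A₁ ∩ A₂) ×ˢ univ ∪ univ ×ˢ ({0, 1} : Set I)))
      (Subtype.val ⁻¹' doubleMappingCylinder A₁ A₂) u h := by
  set E := (A₁ ∩ A₂) ×ˢ univ ∪ univ ×ˢ ({0, 1} : Set I)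
  have mem_E {x : X} {s : I} (he : (x, s) ∈ E) : x ∈ A₁ ∧ x ∈ A₂ ∨ s = 0 ∨ s = 1 := by
    simpa [E] using he
  let H : (X × I) × I → X × I := fun q =>
    (k₂ (k₁ (q.1.1, q.2 * σ q.1.2), q.2 * q.1.2), q.1.2)
  have H_mem : ∀ (e : E) (t : I), H (e, t) ∈ E := by
    rintro ⟨⟨x, s⟩, ⟨⟨hx₁, hx₂⟩, -⟩ | ⟨-, hs⟩⟩ t
    · simp [H, E, h₁.apply_of_mem x hx₁, h₂.apply_of_mem x hx₂, hx₁, hx₂]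
    · exact Or.inr ⟨trivial, hs⟩
  refine ⟨⟨fun e => (1 - e.1.2) * u₁ e.1.1 + e.1.2 * u₂ e.1.1, by fun_prop⟩,
    ⟨fun q => ⟨H (q.1, q.2), H_mem q.1 q.2⟩, by fun_prop⟩, ⟨?_, ?_, ?_, ?_, ?_⟩⟩
  · rintro ⟨⟨x, s⟩, -⟩
    obtain ⟨hu₁, hu₁'⟩ := h₁.mem_Icc x
    obtain ⟨hu₂, hu₂'⟩ := h₂.mem_Icc x
    obtain ⟨hs, hs'⟩ := s.2
    constructor <;> simp only [ContinuousMap.coe_mk] <;> nlinarith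
  · ext ⟨⟨x, s⟩, he⟩
    obtain ⟨hx₁, hx₂⟩ | rfl | rfl := mem_E he
    · simp [mem_doubleMappingCylinder, hx₁, hx₂, h₁.apply_eq_zero_iff.2 hx₁,
        h₂.apply_eq_zero_iff.2 hx₂]
    · simp +contextual [mem_doubleMappingCylinder, h₁.apply_eq_zero_iff]
    · simp +contextual [mem_doubleMappingCylinder, h₂.apply_eq_zero_iff]
  · rintro ⟨⟨x, s⟩, -⟩
    simp [H, h₁.apply_zero, h₂.apply_zero]
  · rintro ⟨⟨x, s⟩, _⟩ hD t
    obtain ⟨hx₁, hx₂⟩ | ⟨hx₁, rfl⟩ | ⟨hx₂, rfl⟩ := mem_doubleMappingCylinder.1 hD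
    · simp [H, h₁.apply_of_mem x hx₁, h₂.apply_of_mem x hx₂]
    · simp [H, h₁.apply_of_mem x hx₁, h₂.apply_zero]
    · simp [H, h₁.apply_zero, h₂.apply_of_mem x hx₂]
  · rintro ⟨⟨x, s⟩, he⟩ hu
    simp only [ContinuousMap.coe_mk, mem_preimage, mem_doubleMappingCylinder] at hu ⊢
    obtain ⟨hx₁, hx₂⟩ | rfl | rfl := mem_E he
    · simp [H, h₁.apply_of_mem x hx₁, h₂.apply_of_mem x hx₂, hx₁, hx₂]
    · simp only [Icc.coe_zero, sub_zero, one_mul, zero_mul, add_zero] at hu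
      simp [H, h₂.apply_zero, h₁.apply_one_mem x hu]
    · simp only [Icc.coe_one, sub_self, zero_mul, one_mul, zero_add] at hu
      simp [H, h₁.apply_zero, h₂.apply_one_mem x hu]

theorem exists_isStromRetraction (hA : IsNDRRep A u h) :
    ∃ r : C(X × I, X × I), IsStromRetraction A r := by
  refine ⟨⟨fun p => (h (p.1, clampI (p.2 / u p.1)), clampI (p.2 - u p.1)),
    (hA.continuous_apply_projIcc_div continuous_fst (by fun_prop)).prodMk (by fun_prop)⟩,
    fun x => ?_, fun a ha t => ?_, fun ⟨x, t⟩ => ?_⟩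
  · simp [hA.apply_zero, (hA.mem_Icc x).1]
  · simp [hA.apply_of_mem a ha, hA.apply_eq_zero_iff.2 ha]
  · simp only [ContinuousMap.coe_mk, projIcc_eq_zero, sub_nonpos]
    exact (le_or_gt (t : ℝ) (u x)).imp id fun hlt =>
      hA.apply_projIcc_div_mem hlt.le (hlt.trans_le t.2.2)

end IsNDRRep

theorem exists_isNDRRep_boundary : ∃ u h, IsNDRRep ({0, 1} : Set I) u h := by
  refine ⟨⟨fun s => min 1 (3 * min (s : ℝ) (1 - s)), by fun_prop⟩,
    ⟨fun q => clampI (q.1 + q.2 * (2 * q.1 - 1)), by fun_prop⟩,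
    ⟨fun s => ?_, ?_, fun s => by simp, ?_, fun s hs => ?_⟩⟩
  · obtain ⟨hs, hs'⟩ := s.2
    exact ⟨le_min zero_le_one (by simp [hs, hs']), min_le_left _ _⟩
  · ext s
    have := s.2
    simp only [mem_insert_iff, mem_singleton_iff, Subtype.ext_iff, Icc.coe_zero, Icc.coe_one,
      mem_preimage, ContinuousMap.coe_mk]
    refine ⟨by rintro (h | h) <;> simp [h], fun h => ?_⟩
    rcases min_cases (1 : ℝ) (3 * min (s : ℝ) (1 - s)) with h' | h' <;>
      rcases min_cases (s : ℝ) (1 - s) with h'' | h''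
    all_goals first | (left; linarith) | (right; linarith)
  · rintro s (rfl | rfl) t <;> simp [t.2.1]
  · simp only [ContinuousMap.coe_mk, Icc.coe_one, one_mul, mem_insert_iff, mem_singleton_iff,
      projIcc_eq_zero, projIcc_eq_one] at hs ⊢
    rcases min_cases (1 : ℝ) (3 * min (s : ℝ) (1 - s)) with h' | h' <;>
      rcases min_cases (s : ℝ) (1 - s) with h'' | h''
    all_goals first | (left; linarith) | (right; linarith)

namespace IsStromRetraction

variable {A : Set X} {r : C(X × I, X × I)}

theorem isNDRPair (hr : IsStromRetraction A r) (hA : IsClosed A) : IsNDRPair A := by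
  -- `u x = sup_t (t - (r (x, t)).2)`, realised as a sup norm in `C(I, ℝ)`
  let lag : C(X × I, ℝ) := ⟨fun p => max 0 ((p.2 : ℝ) - (r p).2), by fun_prop⟩
  let u : C(X, ℝ) := ⟨fun x => ‖lag.curry x‖, by fun_prop⟩
  have lag_le (x : X) (t : I) : lag (x, t) ≤ u x :=
    (le_abs_self _).trans ((lag.curry x).norm_coe_le_norm t)
  have fst_mem (x : X) (t : I) (ht : (r (x, t)).2 ≠ 0) : (r (x, t)).1 ∈ A :=
    (hr.snd_eq_zero_or_fst_mem (x, t)).resolve_left ht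
  refine isNDRPair_iff.2 ⟨hA, u, ⟨fun p => (r p).1, by fun_prop⟩,
    ⟨fun x => ⟨norm_nonneg (lag.curry x), ?_⟩, ?_, fun x => by simp [hr.apply_zero],
      fun a ha t => by simp [hr.apply_of_mem a ha], fun x hx => fst_mem x 1 fun h0 => ?_⟩⟩
  · refine (ContinuousMap.norm_le _ zero_le_one).2 fun t => ?_
    rw [ContinuousMap.curry_apply, Real.norm_eq_abs,
      abs_of_nonneg (show 0 ≤ lag (x, t) from le_max_left _ _)]
    exact max_le zero_le_one (by linarith [(r (x, t)).2.2.1, t.2.2])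
  · ext x
    refine ⟨fun ha => ?_, fun hx => ?_⟩
    · change ‖lag.curry x‖ = 0
      rw [norm_eq_zero]
      ext t
      simp [lag, hr.apply_of_mem x ha t]
    · have hpos (t : ℝ) (ht : 0 < t) : (r (x, clampI t)).1 ∈ A := by
        refine fst_mem x _ fun h0 => ?_
        have := (lag_le x (clampI t)).trans_eq hx
        norm_num [lag, h0, coe_projIcc, ht.not_ge] at this
      have hlim : Tendsto (fun t : ℝ => (r (x, clampI t)).1) (𝓝[>] 0) (𝓝 x) := by
        have : Continuous fun t : ℝ => (r (x, clampI t)).1 := by fun_prop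
        simpa [hr.apply_zero] using (this.tendsto 0).mono_left nhdsWithin_le_nhds
      exact hA.mem_of_tendsto hlim (eventually_nhdsWithin_of_forall hpos)
  · have := (lag_le x 1).trans_lt hx
    simp [lag, h0] at this

open Classical in
theorem trans {B : Set X} (hB : IsClosed B) (hAB : A ⊆ B) (hr : IsStromRetraction B r)
    {r' : C(B × I, B × I)} (hr' : IsStromRetraction (Subtype.val ⁻¹' A) r') :
    ∃ r'' : C(X × I, X × I), IsStromRetraction A r'' := by
  let e : X × I → X × I := fun q =>
    if hq : q.1 ∈ B then Prod.map Subtype.val id (r' (⟨q.1, hq⟩, q.2)) else q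
  have e_of_mem {q : X × I} (hq : q.1 ∈ B) :
      e q = Prod.map Subtype.val id (r' (⟨q.1, hq⟩, q.2)) := dif_pos hq
  have e_zero (x : X) : e (x, 0) = (x, 0) := by
    by_cases hx : x ∈ B
    · simp [e_of_mem (q := (x, 0)) hx, hr'.apply_zero]
    · exact dif_neg hx
  have e_cont : ContinuousOn e (univ ×ˢ {0} ∪ B ×ˢ univ) := by
    refine ContinuousOn.union_of_isClosed ?_ ?_ (isClosed_univ.prod isClosed_singleton)
      (hB.prod isClosed_univ)
    · refine continuousOn_id.congr fun q hq => ?_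
      rw [← Prod.mk.eta (p := q), mem_singleton_iff.1 hq.2]
      exact e_zero q.1
    · rw [continuousOn_iff_continuous_domRestrict]
      refine Continuous.congr (f := fun q : ↥(B ×ˢ univ) =>
        Prod.map Subtype.val id (r' (⟨q.1.1, q.2.1⟩, q.1.2))) (by fun_prop) fun q => ?_
      exact (e_of_mem q.2.1).symm
  have r_mem (p : X × I) : r p ∈ univ ×ˢ {0} ∪ B ×ˢ univ :=
    (hr.snd_eq_zero_or_fst_mem p).imp (fun h => ⟨trivial, h⟩) fun h => ⟨h, trivial⟩
  refine ⟨⟨e ∘ r, e_cont.comp_continuous r.continuous r_mem⟩, fun x => ?_, fun a ha t => ?_,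
    fun p => ?_⟩
  · simp [hr.apply_zero, e_zero]
  · simp [hr.apply_of_mem a (hAB ha), e_of_mem (q := (a, t)) (hAB ha),
      hr'.apply_of_mem ⟨a, hAB ha⟩ ha]
  · simp only [ContinuousMap.coe_mk, Function.comp_apply]
    by_cases hq : (r p).1 ∈ B
    · rw [e_of_mem hq]
      exact hr'.snd_eq_zero_or_fst_mem _
    · rw [show e (r p) = r p from dif_neg hq]
      exact (hr.snd_eq_zero_or_fst_mem p).imp_right fun h => absurd h hq

theorem of_section {A C : Set X} {D : Set (X × I)} {R : C((X × I) × I, (X × I) × I)}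
    (hR : IsStromRetraction D R) (hCD : C ×ˢ univ ⊆ D) (hDA : ∀ p ∈ D, p.1 ∈ A) {v : X → I}
    (hv : ∀ x ∉ C, ContinuousAt v x) (hvA : ∀ a ∈ A, (a, v a) ∈ D) :
    ∃ r : C(X × I, X × I), IsStromRetraction A r := by
  let F : (X × I) × I → X × I := fun q =>
    ((R ((q.1.1, q.2), q.1.2)).1.1, (R ((q.1.1, q.2), q.1.2)).2)
  have hF : Continuous F := by fun_prop
  refine ⟨⟨fun z => F (z, v z.1), continuous_iff_continuousAt.2 fun ⟨x, t⟩ => ?_⟩,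
    fun x => by simp [F, hR.apply_zero], fun a ha t => by simp [F, hR.apply_of_mem _ (hvA a ha)],
    fun z => (hR.snd_eq_zero_or_fst_mem _).imp_right (hDA (R ((z.1, v z.1), z.2)).1)⟩
  by_cases hx : x ∈ C
  · -- `R` is the identity over `C × I`, so the discontinuity of `v` on `C` is invisible
    refine continuousAt_apply_of_forall_eq hF (y₀ := (x, t)) (w₀ := (x, t)) (fun s => ?_)
      continuousAt_id rfl _
    simp [F, hR.apply_of_mem _ (hCD (mk_mem_prod hx (mem_univ s)))]
  · exact hF.continuousAt.comp (continuousAt_id.prodMk ((hv x hx).comp continuousAt_fst))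

end IsStromRetraction

theorem IsNDRRep.exists_isStromRetraction_doubleMappingCylinder {A₁ A₂ : Set X}
    {u₁ u₂ u : C(X, ℝ)} {k₁ k₂ k : C(X × I, X)} (h₁ : IsNDRRep A₁ u₁ k₁)
    (h₂ : IsNDRRep A₂ u₂ k₂) (h₁₂ : IsNDRRep (A₁ ∩ A₂) u k) :
    ∃ R : C((X × I) × I, (X × I) × I), IsStromRetraction (doubleMappingCylinder A₁ A₂) R := by
  obtain ⟨v, k', hv⟩ := exists_isNDRRep_boundary
  obtain ⟨w, H, hE⟩ := h₁₂.prod hv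
  obtain ⟨rE, hrE⟩ := hE.exists_isStromRetraction
  obtain ⟨w', H', hD⟩ := h₁.exists_isNDRRep_subtype_doubleMappingCylinder h₂
  obtain ⟨rD, hrD⟩ := hD.exists_isStromRetraction
  refine hrE.trans hE.isClosed (union_subset_union_right _ ?_) hrD
  exact union_subset (prod_mono (subset_univ _) (by simp)) (prod_mono (subset_univ _) (by simp))

theorem exists_continuousAt_of_notMem_inter {A₁ A₂ : Set X} {u₁ u₂ : C(X, ℝ)}
    (hu₁ : ∀ x, 0 ≤ u₁ x) (hu₂ : ∀ x, 0 ≤ u₂ x) (hA₁ : ∀ x, u₁ x = 0 ↔ x ∈ A₁)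
    (hA₂ : ∀ x, u₂ x = 0 ↔ x ∈ A₂) :
    ∃ v : X → I, (∀ x ∉ A₁ ∩ A₂, ContinuousAt v x) ∧ (∀ a ∈ A₁, v a = 0) ∧
      ∀ a ∈ A₂ \ A₁, v a = 1 := by
  refine ⟨fun x => clampI (u₁ x / (u₁ x + u₂ x)), fun x hx => ?_, fun a ha => ?_,
    fun a ⟨ha₂, ha₁⟩ => ?_⟩
  · have hsum : u₁ x + u₂ x ≠ 0 := fun h0 =>
      hx ⟨(hA₁ x).1 (by linarith [hu₁ x, hu₂ x]), (hA₂ x).1 (by linarith [hu₁ x, hu₂ x])⟩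
    exact continuous_projIcc.continuousAt.comp <|
      u₁.continuous.continuousAt.div (u₁.continuous.add u₂.continuous).continuousAt hsum
  · simp [(hA₁ a).2 ha]
  · have hu : u₁ a ≠ 0 := fun h0 => ha₁ ((hA₁ a).1 h0)
    simp [(hA₂ a).2 ha₂, hu]

end NDR

theorem lillig_union_theorem_general {X : Type*} [TopologicalSpace X] (A₁ A₂ : Set X)
    (h₁ : IsNDRPair A₁) (h₂ : IsNDRPair A₂) (h₁₂ : IsNDRPair (A₁ ∩ A₂)) :
    IsNDRPair (A₁ ∪ A₂) := by
  obtain ⟨hA₁, u₁, k₁, hk₁⟩ := isNDRPair_iff.1 h₁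
  obtain ⟨hA₂, u₂, k₂, hk₂⟩ := isNDRPair_iff.1 h₂
  obtain ⟨-, u, k, hk⟩ := isNDRPair_iff.1 h₁₂
  obtain ⟨R, hR⟩ := hk₁.exists_isStromRetraction_doubleMappingCylinder hk₂ hk
  obtain ⟨v, hv, hv₁, hv₂⟩ := exists_continuousAt_of_notMem_inter (fun x => (hk₁.mem_Icc x).1)
    (fun x => (hk₂.mem_Icc x).1) (fun _ => hk₁.apply_eq_zero_iff) (fun _ => hk₂.apply_eq_zero_iff)
  have hDA (p : X × I) (hp : p ∈ doubleMappingCylinder A₁ A₂) : p.1 ∈ A₁ ∪ A₂ := by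
    rcases mem_doubleMappingCylinder.1 hp with ⟨hp, -⟩ | ⟨hp, -⟩ | ⟨hp, -⟩
    exacts [Or.inl hp, Or.inl hp, Or.inr hp]
  have hvA (a : X) (ha : a ∈ A₁ ∪ A₂) : (a, v a) ∈ doubleMappingCylinder A₁ A₂ := by
    refine mem_doubleMappingCylinder.2 (Or.inr ?_)
    by_cases ha₁ : a ∈ A₁
    · exact Or.inl ⟨ha₁, hv₁ a ha₁⟩
    · exact Or.inr ⟨ha.resolve_left ha₁, hv₂ a ⟨ha.resolve_left ha₁, ha₁⟩⟩
  obtain ⟨r, hr⟩ := hR.of_section subset_union_left hDA hv hvA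
  exact hr.isNDRPair (hA₁.union hA₂)

/-- **Lillig's union theorem for cofibrations.**  If `A₁`, `A₂` are closed subsets of `X` such
that `(X, A₁)`, `(X, A₂)` and `(X, A₁ ∩ A₂)` are NDR pairs (equivalently, the inclusions are
closed Hurewicz cofibrations), then `(X, A₁ ∪ A₂)` is an NDR pair, i.e. the inclusion
`A₁ ∪ A₂ → X` is a closed Hurewicz cofibration. -/
theorem lillig_union_theorem {X : Type*} [TopologicalSpace X] (A₁ A₂ : Set X)
    (hA₁ : IsClosed A₁) (hA₂ : IsClosed A₂)
    (h₁ : IsNDRPair A₁) (h₂ : IsNDRPair A₂) (h₁₂ : IsNDRPair (A₁ ∩ A₂)) :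
    IsNDRPair (A₁ ∪ A₂) :=
  lillig_union_theorem_general A₁ A₂ h₁ h₂ h₁₂
end

section
/- If i₁ : A₁ → X₁ and i₂ : A₂ → X₂ are closed Hurewicz cofibrations of topological spaces, then the product map i₁ × i₂ : A₁ × A₂ → X₁ × X₂ is a closed Hurewicz cofibration. -/
/-!
A map `i : A → X` has the homotopy extension property iff `X × I` retracts onto
`X × {0} ∪ i(A) × I`: one direction extends the inclusion of that subspace, the other glues
`f` and `H` along the two closed pieces (this is where closedness of `i(A)` enters) and
precomposes with the retraction. For a product, retractions `r₁, r₂` combine into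
`(x₁, x₂, t) ↦ (r₁(x₁, t)₁, r₂(x₂, t)₁, min (r₁(x₁, t)₂) (r₂(x₂, t)₂))`: the time coordinate
vanishes as soon as one factor has left `i(A)`.
-/

universe u

/-- A continuous map `i : A → X` is a closed Hurewicz cofibration if it is a closed embedding
and has the homotopy extension property with respect to all spaces. -/
def IsClosedCofibration {A X : Type u} [TopologicalSpace A] [TopologicalSpace X]
    (i : C(A, X)) : Prop :=
  Topology.IsClosedEmbedding i ∧
  ∀ (Y : Type u) [TopologicalSpace Y] (f : C(X, Y)) (H : C(A × unitInterval, Y)),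
    (∀ a, H (a, 0) = f (i a)) →
    ∃ G : C(X × unitInterval, Y), (∀ x, G (x, 0) = f x) ∧ ∀ a t, G (i a, t) = H (a, t)

open Set Topology unitInterval

section

variable {A X : Type u} [TopologicalSpace A] [TopologicalSpace X]

def HomotopyExtensionProperty (i : C(A, X)) : Prop :=
  ∀ (Y : Type u) [TopologicalSpace Y] (f : C(X, Y)) (H : C(A × I, Y)),
    (∀ a, H (a, 0) = f (i a)) →
    ∃ G : C(X × I, Y), (∀ x, G (x, 0) = f x) ∧ ∀ a t, G (i a, t) = H (a, t)

def cylinderBase (i : C(A, X)) : Set (X × I) :=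
  {p | p.2 = 0} ∪ {p | p.1 ∈ range i}

structure CylinderRetraction (i : C(A, X)) where
  toContinuousMap : C(X × I, X × I)
  map_zero : ∀ x, toContinuousMap (x, 0) = (x, 0)
  map_range : ∀ a t, toContinuousMap (i a, t) = (i a, t)
  mem_cylinderBase : ∀ p, toContinuousMap p ∈ cylinderBase i

theorem HomotopyExtensionProperty.nonempty_cylinderRetraction {i : C(A, X)}
    (hi : HomotopyExtensionProperty i) : Nonempty (CylinderRetraction i) := by
  let f : C(X, cylinderBase i) := ⟨fun x => ⟨(x, 0), .inl rfl⟩, by fun_prop⟩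
  let H : C(A × I, cylinderBase i) := ⟨fun p => ⟨(i p.1, p.2), .inr ⟨p.1, rfl⟩⟩, by fun_prop⟩
  obtain ⟨G, hG_zero, hG_range⟩ := hi _ f H fun _ => rfl
  exact ⟨{ toContinuousMap := ⟨fun p => (G p).1, by fun_prop⟩
           map_zero := fun x => congrArg Subtype.val (hG_zero x)
           map_range := fun a t => congrArg Subtype.val (hG_range a t)
           mem_cylinderBase := fun p => (G p).2 }⟩

theorem CylinderRetraction.homotopyExtensionProperty {i : C(A, X)} (hi : IsClosedEmbedding i)
    (r : CylinderRetraction i) : HomotopyExtensionProperty i := by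
  classical
  intro Y _ f H hH
  let e : A ≃ₜ range i := hi.isEmbedding.toHomeomorph
  let g : X × I → Y := fun p => if h : p.1 ∈ range i then H (e.symm ⟨p.1, h⟩, p.2) else f p.1
  have hg_range (a : A) (t : I) : g (i a, t) = H (a, t) := by simp [g, e]
  have hg_zero (x : X) : g (x, 0) = f x := by
    by_cases hx : x ∈ range i
    · obtain ⟨a, rfl⟩ := hx
      rw [hg_range, hH]
    · exact dif_neg hx
  have hg_on_zero : ContinuousOn g {p | p.2 = 0} :=
    (f.continuous.comp continuous_fst).continuousOn.congr fun p (hp : p.2 = 0) => by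
      rw [Function.comp_apply, ← hg_zero, ← hp]
  have hg_on_range : ContinuousOn g {p | p.1 ∈ range i} := by
    rw [continuousOn_iff_continuous_domRestrict]
    exact Continuous.congr (f := fun q : {p : X × I | p.1 ∈ range i} =>
      H (e.symm ⟨q.1.1, q.2⟩, q.1.2)) (by fun_prop) fun q => (dif_pos q.2 : g q = _).symm
  have hg : ContinuousOn g (cylinderBase i) :=
    hg_on_zero.union_of_isClosed hg_on_range (isClosed_eq continuous_snd continuous_const)
      (hi.isClosed_range.preimage continuous_fst)
  refine ⟨⟨g ∘ r.toContinuousMap, hg.comp_continuous r.toContinuousMap.continuous r.mem_cylinderBase⟩,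
    fun x => ?_, fun a t => ?_⟩
  · simp only [ContinuousMap.coe_mk, Function.comp_apply, r.map_zero, hg_zero]
  · simp only [ContinuousMap.coe_mk, Function.comp_apply, r.map_range, hg_range]

def CylinderRetraction.prodMap {A' X' : Type u} [TopologicalSpace A'] [TopologicalSpace X']
    {i : C(A, X)} {i' : C(A', X')} (r : CylinderRetraction i) (r' : CylinderRetraction i') :
    CylinderRetraction (i.prodMap i') where
  toContinuousMap :=
    ⟨fun p => (((r.toContinuousMap (p.1.1, p.2)).1, (r'.toContinuousMap (p.1.2, p.2)).1),
      min (r.toContinuousMap (p.1.1, p.2)).2 (r'.toContinuousMap (p.1.2, p.2)).2), by fun_prop⟩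
  map_zero x := by simp [r.map_zero, r'.map_zero]
  map_range a t := by simp [r.map_range, r'.map_range, Prod.map]
  mem_cylinderBase p := by
    rcases r.mem_cylinderBase (p.1.1, p.2) with (h : _ = 0) | h
    · exact .inl (by simp [h])
    rcases r'.mem_cylinderBase (p.1.2, p.2) with (h' : _ = 0) | h'
    · exact .inl (by simp [h'])
    exact .inr (show _ ∈ range (Prod.map i i') from range_prodMap ▸ ⟨h, h'⟩)

end

/-- If `i₁ : A₁ → X₁` and `i₂ : A₂ → X₂` are closed Hurewicz cofibrations of topological
spaces, then the product map `i₁ × i₂ : A₁ × A₂ → X₁ × X₂` is a closed Hurewicz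
cofibration. -/
theorem isClosedCofibration_prodMap {A₁ X₁ A₂ X₂ : Type u}
    [TopologicalSpace A₁] [TopologicalSpace X₁] [TopologicalSpace A₂] [TopologicalSpace X₂]
    (i₁ : C(A₁, X₁)) (i₂ : C(A₂, X₂))
    (h₁ : IsClosedCofibration i₁) (h₂ : IsClosedCofibration i₂) :
    IsClosedCofibration (i₁.prodMap i₂) := by
  obtain ⟨r₁⟩ := HomotopyExtensionProperty.nonempty_cylinderRetraction h₁.2
  obtain ⟨r₂⟩ := HomotopyExtensionProperty.nonempty_cylinderRetraction h₂.2
  have hi : IsClosedEmbedding (i₁.prodMap i₂) := h₁.1.prodMap h₂.1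
  exact ⟨hi, (r₁.prodMap r₂).homotopyExtensionProperty hi⟩
end

section
/- Let G be a simplicial topological group such that each inclusion of the identity element {1} → Gₙ is a closed Hurewicz cofibration (G is well pointed). Then for every n and every 0 ≤ i ≤ n, the degeneracy map sᵢ : Gₙ → G_{n+1} is a closed Hurewicz cofibration. -/
universe u

open CategoryTheory Simplicial Opposite

/-
The retraction `g ↦ g * (sᵢ dᵢ₊₁ g)⁻¹` together with `dᵢ₊₁` identifies `Gₙ₊₁` with
`Gₙ × ker dᵢ₊₁`, and under this homeomorphism `sᵢ` becomes `g ↦ (g, 1)`. The kernel is a retract of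
the well-pointed group `Gₙ₊₁`, hence well pointed, and `A → A × K, a ↦ (a, k₀)` is a closed
cofibration whenever `{k₀} → K` is one: glue `f` and `H` along the retraction of `K × I` onto
`K × {0} ∪ {k₀} × I` provided by the homotopy extension property of `{k₀} → K`.
-/

open Topology unitInterval

theorem isClosedEmbedding_const_punit_iff {X : Type u} [TopologicalSpace X] (x : X) :
    IsClosedEmbedding (ContinuousMap.const PUnit.{u + 1} x) ↔ IsClosed ({x} : Set X) := by
  have hrange : Set.range (ContinuousMap.const PUnit.{u + 1} x) = {x} := Set.range_const
  refine ⟨fun h => hrange ▸ h.isClosed_range, fun hx => ?_⟩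
  refine .of_continuous_injective_isClosedMap (map_continuous _)
    (Function.injective_of_subsingleton _) fun C _ => ?_
  rcases C.eq_empty_or_nonempty with rfl | hC
  · simp
  · exact (hC.image_const x).symm ▸ hx

namespace IsClosedCofibration

theorem homeomorph_comp {A X X' : Type u} [TopologicalSpace A] [TopologicalSpace X]
    [TopologicalSpace X'] {i : C(A, X)} (h : IsClosedCofibration i) (e : X ≃ₜ X') :
    IsClosedCofibration ((e : C(X, X')).comp i) := by
  refine ⟨e.isClosedEmbedding.comp h.1, fun Y _ f H hH => ?_⟩
  obtain ⟨G, hG₀, hG⟩ := h.2 Y (f.comp e) H hH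
  exact ⟨G.comp ((e.symm : C(X', X)).prodMap (.id I)),
    fun x => by simpa using hG₀ (e.symm x), fun a t => by simpa using hG a t⟩

theorem const_of_retract {K X : Type u} [TopologicalSpace K] [TopologicalSpace X]
    {ι : C(K, X)} {r : C(X, K)} (hr : ∀ k, r (ι k) = k) {k₀ : K}
    (h : IsClosedCofibration (ContinuousMap.const PUnit.{u + 1} (ι k₀))) :
    IsClosedCofibration (ContinuousMap.const PUnit.{u + 1} k₀) := by
  refine ⟨(isClosedEmbedding_const_punit_iff k₀).2 ?_, fun Y _ f H hH => ?_⟩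
  · rw [← (Function.LeftInverse.injective hr).preimage_image {k₀}, Set.image_singleton]
    exact ((isClosedEmbedding_const_punit_iff _).1 h.1).preimage ι.continuous
  obtain ⟨G, hG₀, hG⟩ := h.2 Y (f.comp r) H (by simpa [hr] using hH)
  exact ⟨G.comp (ι.prodMap (.id I)), fun k => by simpa [hr] using hG₀ (ι k), hG⟩

theorem exists_cylinder_retraction {X : Type u} [TopologicalSpace X] {x₀ : X}
    (h : IsClosedCofibration (ContinuousMap.const PUnit.{u + 1} x₀)) :
    ∃ ρ : C(X × I, X × I), (∀ p, (ρ p).2 = 0 ∨ (ρ p).1 = x₀) ∧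
      (∀ x, ρ (x, 0) = (x, 0)) ∧ ∀ t, ρ (x₀, t) = (x₀, t) := by
  obtain ⟨ρ, hρ₀, hρ⟩ := h.2 {p : X × I // p.2 = 0 ∨ p.1 = x₀}
    ⟨fun x => ⟨(x, 0), .inl rfl⟩, by fun_prop⟩ ⟨fun p => ⟨(x₀, p.2), .inr rfl⟩, by fun_prop⟩
    fun _ => rfl
  exact ⟨.comp ⟨Subtype.val, continuous_subtype_val⟩ ρ, fun p => (ρ p).2,
    fun x => congrArg Subtype.val (hρ₀ x), fun t => congrArg Subtype.val (hρ .unit t)⟩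

theorem prodMk_const {A K : Type u} [TopologicalSpace A] [TopologicalSpace K] {k₀ : K}
    (h : IsClosedCofibration (ContinuousMap.const PUnit.{u + 1} k₀)) :
    IsClosedCofibration ((ContinuousMap.id A).prodMk (ContinuousMap.const A k₀)) := by
  have hk₀ : IsClosed ({k₀} : Set K) := (isClosedEmbedding_const_punit_iff k₀).1 h.1
  refine ⟨⟨isEmbedding_prodMkLeft k₀, ?_⟩, fun Y _ f H hH => ?_⟩
  · convert hk₀.preimage continuous_snd
    ext ⟨a, k⟩
    simp [eq_comm]
  obtain ⟨ρ, hρU, hρ₀, hρk₀⟩ := h.exists_cylinder_retraction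
  let Φ : A × (K × I) → Y := fun p => if p.2.2 = 0 then f (p.1, p.2.1) else H (p.1, p.2.2)
  have hΦ : ContinuousOn Φ ({p | p.2.2 = 0} ∪ {p | p.2.1 = k₀}) := by
    refine .union_of_isClosed ?_ ?_ (isClosed_singleton.preimage (by fun_prop))
      (hk₀.preimage (by fun_prop))
    · exact (by fun_prop : Continuous fun p : A × (K × I) => f (p.1, p.2.1)).continuousOn.congr
        fun p hp => if_pos hp
    · refine (by fun_prop : Continuous fun p : A × (K × I) => H (p.1, p.2.2)).continuousOn.congr
        fun p (hp : p.2.1 = k₀) => ?_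
      by_cases ht : p.2.2 = 0
      · simp [Φ, ht, hp, hH]
      · simp [Φ, ht]
  refine ⟨⟨fun q => Φ (q.1.1, ρ (q.1.2, q.2)), hΦ.comp_continuous (by fun_prop) fun q => hρU _⟩,
    fun x => by simp [Φ, hρ₀], fun a t => ?_⟩
  by_cases ht : t = 0
  · simp [Φ, hρk₀, ht, hH]
  · simp [Φ, hρk₀, ht]

end IsClosedCofibration

def homeomorphProdKerOfLeftInverse {A X : Type u} [Group A] [TopologicalSpace A] [Group X]
    [TopologicalSpace X] [IsTopologicalGroup X] (s : A →* X) (d : X →* A) (hs : Continuous s)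
    (hd : Continuous d) (hds : ∀ a, d (s a) = a) : X ≃ₜ A × d.ker where
  toFun g := (d g, ⟨g * (s (d g))⁻¹, by simp [hds]⟩)
  invFun p := p.2 * s p.1
  left_inv g := by simp
  right_inv := by
    rintro ⟨a, k, hk⟩
    rw [MonoidHom.mem_ker] at hk
    ext <;> simp [hk, hds]
  continuous_toFun := by fun_prop
  continuous_invFun := by fun_prop

theorem isClosedCofibration_of_leftInverse {A X : Type u} [Group A] [TopologicalSpace A]
    [Group X] [TopologicalSpace X] [IsTopologicalGroup X] (s : A →* X) (d : X →* A)
    (hs : Continuous s) (hd : Continuous d) (hds : ∀ a, d (s a) = a)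
    (h : IsClosedCofibration (ContinuousMap.const PUnit.{u + 1} (1 : X))) :
    IsClosedCofibration ⟨s, hs⟩ := by
  let e := homeomorphProdKerOfLeftInverse s d hs hd hds
  have hker : IsClosedCofibration (ContinuousMap.const PUnit.{u + 1} (1 : d.ker)) :=
    h.const_of_retract (ι := ⟨Subtype.val, continuous_subtype_val⟩)
      (r := .comp ⟨Prod.snd, continuous_snd⟩ (e : C(X, A × d.ker))) fun ⟨k, hk⟩ => by
        rw [MonoidHom.mem_ker] at hk
        apply Subtype.ext
        simp [e, homeomorphProdKerOfLeftInverse, hk]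
  convert (hker.prodMk_const (A := A)).homeomorph_comp e.symm
  ext a
  simp [e, homeomorphProdKerOfLeftInverse]

/-- Let `G` be a simplicial topological group (a simplicial object in topological spaces with
a continuous, levelwise group structure for which all simplicial structure maps are group
homomorphisms), such that each inclusion of the identity element `{1} → Gₙ` is a closed
Hurewicz cofibration (i.e. `G` is well pointed).  Then for every `n` and every `0 ≤ i ≤ n`,
the degeneracy map `sᵢ : Gₙ → Gₙ₊₁` is a closed Hurewicz cofibration. -/
theorem degeneracy_isClosedCofibration_of_wellPointed
    (G : SimplicialObject TopCat.{u})
    (grp : ∀ x : SimplexCategoryᵒᵖ, Group (G.obj x))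
    (contMul : ∀ x : SimplexCategoryᵒᵖ,
      Continuous fun p : (G.obj x) × (G.obj x) =>
        (letI := grp x; p.1 * p.2 : G.obj x))
    (contInv : ∀ x : SimplexCategoryᵒᵖ,
      Continuous fun g : G.obj x => (letI := grp x; g⁻¹ : G.obj x))
    (homMaps : ∀ {x y : SimplexCategoryᵒᵖ} (f : x ⟶ y) (a b : G.obj x),
      letI := grp x; letI := grp y
      G.map f (a * b) = G.map f a * G.map f b)
    (wellPointed : ∀ x : SimplexCategoryᵒᵖ,
      IsClosedCofibration
        (⟨fun _ : PUnit.{u + 1} => (letI := grp x; (1 : G.obj x)), continuous_const⟩ :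
          C(PUnit, G.obj x))) :
    ∀ (n : ℕ) (i : Fin (n + 1)), IsClosedCofibration ((G.σ i).hom : C(G _⦋n⦌, G _⦋n + 1⦌)) := by
  intro n i
  let := grp (op ⦋n⦌)
  let := grp (op ⦋n + 1⦌)
  have : IsTopologicalGroup (G _⦋n + 1⦌) :=
    { continuous_mul := contMul _, continuous_inv := contInv _ }
  exact isClosedCofibration_of_leftInverse
    (.mk' _ (homMaps (SimplexCategory.σ i).op)) (.mk' _ (homMaps (SimplexCategory.δ i.succ).op))
    (G.σ i).hom.continuous (G.δ i.succ).hom.continuous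
    (ConcreteCategory.congr_hom (SimplicialObject.δ_comp_σ_succ (X := G) (i := i)))
    (wellPointed _)
end

section
/- For a simplicial object X in a category with finite limits, and for any i < j, the square with maps s_i : X_{n−1} → X_n, s_{j−1} : X_{n−1} → X_n, s_j : X_n → X_{n+1}, s_i : X_n → X_{n+1} (i.e., s_j ∘ s_i = s_i ∘ s_{j−1}) is a pullback square. -/
/-!
The face map `δ_{i}` retracts both `σᵢ` and (one dimension up) `σ_{i}` on the other side of
the square, and it carries `σ_{j+1}` to `σⱼ` by the simplicial identity
`σ_{j+1} ≫ δᵢ = δᵢ ≫ σⱼ`. So for a cone `(a, b)` the composite `a ≫ δᵢ` is the only possible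
lift, it factors `b` through `σⱼ`, and it factors `a` through `σᵢ` because `σ_{j+1}` is a
split mono.
-/

universe v u

open CategoryTheory Simplicial

namespace CategoryTheory

theorem IsPullback.of_retractions {C : Type u} [Category.{v} C] {P X Y Z : C}
    {fst : P ⟶ X} {snd : P ⟶ Y} {f : X ⟶ Z} {g : Y ⟶ Z} [Mono f]
    (w : fst ≫ f = snd ≫ g) (r : X ⟶ P) (hr : fst ≫ r = 𝟙 P)
    (r' : Z ⟶ Y) (hr' : g ≫ r' = 𝟙 Y) (hrr' : r ≫ snd = f ≫ r') :
    IsPullback fst snd f g := by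
  have lift_snd (s : Limits.PullbackCone f g) : (s.fst ≫ r) ≫ snd = s.snd := by
    rw [Category.assoc, hrr', s.condition_assoc, hr', Category.comp_id]
  have lift_fst (s : Limits.PullbackCone f g) : (s.fst ≫ r) ≫ fst = s.fst := by
    rw [← cancel_mono f, Category.assoc, w, ← Category.assoc, lift_snd, s.condition]
  refine IsPullback.of_isLimit' ⟨w⟩
    (Limits.PullbackCone.IsLimit.mk _ (fun s => s.fst ≫ r) lift_fst lift_snd ?_)
  intro s m hm _
  rw [← hm, Category.assoc, hr, Category.comp_id]

instance SimplicialObject.isSplitMono_σ {C : Type u} [Category.{v} C]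
    (X : SimplicialObject C) {n : ℕ} (i : Fin (n + 1)) : IsSplitMono (X.σ i) :=
  IsSplitMono.mk' ⟨X.δ i.castSucc, X.δ_comp_σ_self⟩

end CategoryTheory

theorem degeneracy_square_isPullback_general {C : Type u} [Category.{v} C]
    (X : SimplicialObject C) {n : ℕ}
    (i j : Fin (n + 1)) (H : i ≤ j) :
    IsPullback (X.σ i) (X.σ j) (X.σ j.succ) (X.σ i.castSucc) :=
  IsPullback.of_retractions (X.σ_comp_σ H).symm (X.δ i.castSucc) X.δ_comp_σ_self
    (X.δ i.castSucc.castSucc) X.δ_comp_σ_self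
    (X.δ_comp_σ_of_le (Fin.castSucc_le_castSucc_iff.mpr H)).symm

/-- For a simplicial object `X` in a category with finite limits, the commutative square of
degeneracies expressing the simplicial identity `sⱼ ∘ sᵢ = sᵢ ∘ sⱼ₋₁` (for `i < j`, here
written with `i ≤ j` and the square `σᵢ ≫ σ_{j+1} = σⱼ ≫ σ_{i}` with appropriately cast
indices) is a pullback square. -/
theorem degeneracy_square_isPullback {C : Type u} [Category.{v} C]
    [Limits.HasFiniteLimits C] (X : SimplicialObject C) {n : ℕ}
    (i j : Fin (n + 1)) (H : i ≤ j) :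
    IsPullback (X.σ i) (X.σ j) (X.σ j.succ) (X.σ i.castSucc) :=
  degeneracy_square_isPullback_general X i j H
end

section
/- Let f : Y₁ ×_{Y₀^{[2]}} Y₁ → S¹ be a continuous map, where Y₁ → Y₀^{[2]} is a surjection admitting local sections, satisfying the cocycle condition f(u,v)·f(v,w) = f(u,w) for all triples u,v,w ∈ Y₁ lying over the same point of Y₀^{[2]}. Then the quotient L of Y₁ × S¹ by the relation (u,ξ) ∼ (v,η) iff ξ = η·f(u,v) is a principal S¹-bundle over Y₀^{[2]}. -/
/-!
The cocycle identity `f(u,v) f(v,w) = f(u,w)` makes the difference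
`(⟦(u, ξ)⟧, ⟦(v, η)⟧) ↦ ξ⁻¹ η f(u,v)` well defined on `L`, and `f(u,u) = 1` makes it invert the
action `⟦(u, ξ)⟧ • g = ⟦(u, ξ g)⟧`. A local section `s` of `p` over `U` gives the local section
`x ↦ ⟦(s x, 1)⟧` of `π : L → Z` and the trivialization `χ l = diff ⟦(s (π l), 1)⟧ l` over `U`.
Since `diff` is itself a cocycle, `diff l₁ l₂ = (χ l₁)⁻¹ χ l₂` over `U`, so continuity of the
difference reduces to continuity of `χ`, which can be checked on `Y × G` because `Y × G → L` is
a quotient map.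
-/

namespace CocycleBundle

variable {Y Z G : Type*} [CommGroup G] {p : Y → Z} {f : {uv : Y × Y // p uv.1 = p uv.2} → G}

variable (p f) in
def IsCocycle : Prop :=
  ∀ (u v w : Y) (huv : p u = p v) (hvw : p v = p w),
    f ⟨(u, v), huv⟩ * f ⟨(v, w), hvw⟩ = f ⟨(u, w), huv.trans hvw⟩

theorem IsCocycle.apply_self (hf : IsCocycle p f) (u : Y) : f ⟨(u, u), rfl⟩ = 1 :=
  mul_eq_left.mp (hf u u u rfl rfl)

variable (p f)

def rel (a b : Y × G) : Prop :=
  ∃ h : p a.1 = p b.1, a.2 = b.2 * f ⟨(a.1, b.1), h⟩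

def proj : Quot (rel p f) → Z :=
  Quot.lift (fun a => p a.1) fun _ _ h => h.1

def act (l : Quot (rel p f)) (g : G) : Quot (rel p f) :=
  Quot.map (fun a => (a.1, a.2 * g)) (fun _ _ ⟨h, e⟩ => ⟨h, by rw [e, mul_right_comm]⟩) l

theorem act_one (l : Quot (rel p f)) : act p f l 1 = l :=
  Quot.inductionOn l fun a => congrArg (Quot.mk _) (Prod.ext rfl (mul_one a.2))

theorem act_act (l : Quot (rel p f)) (g h : G) : act p f (act p f l g) h = act p f l (g * h) :=
  Quot.inductionOn l fun a => congrArg (Quot.mk _) (Prod.ext rfl (mul_assoc a.2 g h))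

theorem proj_act (l : Quot (rel p f)) (g : G) : proj p f (act p f l g) = proj p f l :=
  Quot.inductionOn l fun _ => rfl

theorem continuous_proj [TopologicalSpace Y] [TopologicalSpace Z] [TopologicalSpace G]
    (hp : Continuous p) : Continuous (proj p f) :=
  continuous_quot_lift _ (hp.comp continuous_fst)

/-- Local compactness of `G` is what makes `(Y × G) × G → L × G` a quotient map. -/
theorem continuous_act [TopologicalSpace Y] [TopologicalSpace G] [ContinuousMul G]
    [LocallyCompactSpace G] : Continuous fun x : Quot (rel p f) × G => act p f x.1 x.2 :=
  isQuotientMap_quot_mk.continuous_lift_prod_left <| continuous_quot_mk.comp <|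
    continuous_fst.fst.prodMk (continuous_fst.snd.mul continuous_snd)

open scoped Classical in
noncomputable def diffRep (a b : Y × G) : G :=
  if h : p a.1 = p b.1 then a.2⁻¹ * b.2 * f ⟨(a.1, b.1), h⟩ else 1

variable {p f}

theorem diffRep_of_eq {a b : Y × G} (h : p a.1 = p b.1) :
    diffRep p f a b = a.2⁻¹ * b.2 * f ⟨(a.1, b.1), h⟩ :=
  dif_pos h

theorem IsCocycle.diffRep_left (hf : IsCocycle p f) {a a' : Y × G} (b : Y × G)
    (haa' : rel p f a a') : diffRep p f a b = diffRep p f a' b := by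
  obtain ⟨h, e⟩ := haa'
  by_cases hab : p a.1 = p b.1
  · have ha'b : p a'.1 = p b.1 := h.symm.trans hab
    rw [diffRep_of_eq hab, diffRep_of_eq ha'b, e, ← hf a.1 a'.1 b.1 h ha'b]
    grind [mul_inv_rev, mul_inv_cancel]
  · rw [diffRep, diffRep, dif_neg hab, dif_neg fun h' => hab (h.trans h')]

theorem IsCocycle.diffRep_right (hf : IsCocycle p f) (a : Y × G) {b b' : Y × G}
    (hbb' : rel p f b b') : diffRep p f a b = diffRep p f a b' := by
  obtain ⟨h, e⟩ := hbb'
  by_cases hab : p a.1 = p b.1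
  · rw [diffRep_of_eq hab, diffRep_of_eq (hab.trans h), e, ← hf a.1 b.1 b'.1 hab h]
    ac_rfl
  · rw [diffRep, diffRep, dif_neg hab, dif_neg fun h' => hab (h'.trans h.symm)]

/-- The element of `G` carrying `l₁` to `l₂` when both lie in the same fibre (`1` otherwise). -/
noncomputable def diff (hf : IsCocycle p f) : Quot (rel p f) → Quot (rel p f) → G :=
  Quot.lift₂ (diffRep p f) (fun a _ _ => hf.diffRep_right a) (fun _ _ b => hf.diffRep_left b)

section diff

variable (hf : IsCocycle p f)
include hf

theorem act_diff {l₁ l₂ : Quot (rel p f)} (h : proj p f l₁ = proj p f l₂) :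
    act p f l₁ (diff hf l₁ l₂) = l₂ := by
  induction l₁ using Quot.ind with | mk a => ?_
  induction l₂ using Quot.ind with | mk b => ?_
  refine Quot.sound ⟨h, ?_⟩
  change a.2 * diffRep p f a b = _
  rw [diffRep_of_eq h, mul_assoc, mul_inv_cancel_left]

theorem diff_act (l : Quot (rel p f)) (g : G) : diff hf l (act p f l g) = g := by
  induction l using Quot.ind with | mk a => ?_
  change diffRep p f a (a.1, a.2 * g) = g
  rw [diffRep_of_eq (a := a) (b := (a.1, a.2 * g)) rfl, hf.apply_self, mul_one,
    inv_mul_cancel_left]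

theorem diff_mul_diff {l₀ l₁ l₂ : Quot (rel p f)} (h₀₁ : proj p f l₀ = proj p f l₁)
    (h₁₂ : proj p f l₁ = proj p f l₂) : diff hf l₀ l₁ * diff hf l₁ l₂ = diff hf l₀ l₂ := by
  induction l₀ using Quot.ind with | mk a₀ => ?_
  induction l₁ using Quot.ind with | mk a₁ => ?_
  induction l₂ using Quot.ind with | mk a₂ => ?_
  change diffRep p f a₀ a₁ * diffRep p f a₁ a₂ = diffRep p f a₀ a₂
  rw [diffRep_of_eq h₀₁, diffRep_of_eq h₁₂, diffRep_of_eq (h₀₁.trans h₁₂),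
    ← hf a₀.1 a₁.1 a₂.1 h₀₁ h₁₂]
  grind [mul_inv_cancel]

end diff

variable {U : Set Z}

variable (f) in
def localSection (s : U → Y) (x : U) : Quot (rel p f) :=
  Quot.mk _ (s x, 1)

theorem proj_localSection {s : U → Y} (hs : ∀ x, p (s x) = x) (x : U) :
    proj p f (localSection f s x) = x :=
  hs x

theorem continuous_localSection [TopologicalSpace Y] [TopologicalSpace Z] [TopologicalSpace G]
    {s : U → Y} (hs : Continuous s) : Continuous (localSection f s) :=
  continuous_quot_mk.comp (hs.prodMk continuous_const)

open scoped Classical in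
noncomputable def localTriv (hf : IsCocycle p f) (s : U → Y) (l : Quot (rel p f)) : G :=
  if h : proj p f l ∈ U then diff hf (localSection f s ⟨_, h⟩) l else 1

theorem localTriv_of_eq (hf : IsCocycle p f) (s : U → Y) {l : Quot (rel p f)} {x : U}
    (h : proj p f l = x) : localTriv hf s l = diff hf (localSection f s x) l := by
  obtain ⟨x, hx⟩ := x
  subst h
  exact dif_pos hx

theorem diff_eq_localTriv (hf : IsCocycle p f) {s : U → Y} (hs : ∀ x, p (s x) = x)
    {l₁ l₂ : Quot (rel p f)} (h : proj p f l₁ = proj p f l₂) (hl₁ : proj p f l₁ ∈ U) :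
    diff hf l₁ l₂ = (localTriv hf s l₁)⁻¹ * localTriv hf s l₂ := by
  set x : U := ⟨_, hl₁⟩
  rw [localTriv_of_eq hf s (x := x) rfl, localTriv_of_eq hf s (x := x) h.symm,
    eq_inv_mul_iff_mul_eq]
  exact diff_mul_diff hf (proj_localSection hs x) h

theorem continuousOn_localTriv [TopologicalSpace Y] [TopologicalSpace Z] [TopologicalSpace G]
    [IsTopologicalGroup G] (hp : Continuous p) (hfc : Continuous f) (hf : IsCocycle p f)
    (hU : IsOpen U) {s : U → Y} (hsc : Continuous s) (hs : ∀ x, p (s x) = x) :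
    ContinuousOn (localTriv hf s) (proj p f ⁻¹' U) := by
  rw [isQuotientMap_quot_mk.continuousOn_isOpen_iff (hU.preimage (continuous_proj p f hp)),
    continuousOn_iff_continuous_domRestrict]
  have hmk (a : {a : Y × G // p a.1 ∈ U}) : localTriv hf s (Quot.mk _ a.1) =
      (1 : G)⁻¹ * a.1.2 * f ⟨(s ⟨p a.1.1, a.2⟩, a.1.1), hs _⟩ := by
    rw [localTriv_of_eq hf s (x := ⟨p a.1.1, a.2⟩) rfl]
    exact diffRep_of_eq _
  change Continuous fun a : {a : Y × G // p a.1 ∈ U} => localTriv hf s (Quot.mk _ a.1)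
  simp only [hmk]
  fun_prop

theorem continuous_diff [TopologicalSpace Y] [TopologicalSpace Z] [TopologicalSpace G]
    [IsTopologicalGroup G] (hp : Continuous p) (hfc : Continuous f) (hf : IsCocycle p f)
    (hsec : ∀ z, ∃ U : Set Z, IsOpen U ∧ z ∈ U ∧
      ∃ s : U → Y, Continuous s ∧ ∀ x : U, p (s x) = x) :
    Continuous fun l : {l : Quot (rel p f) × Quot (rel p f) // proj p f l.1 = proj p f l.2} =>
      diff hf l.1.1 l.1.2 := by
  refine continuous_iff_continuousAt.2 fun t => ?_
  obtain ⟨U, hU, htU, s, hsc, hs⟩ := hsec (proj p f t.1.1)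
  have hχ := continuousOn_localTriv hp hfc hf hU hsc hs
  have hV : IsOpen (proj p f ⁻¹' U) := hU.preimage (continuous_proj p f hp)
  have hfst : Continuous fun l : {l : Quot (rel p f) × Quot (rel p f) //
      proj p f l.1 = proj p f l.2} => l.1.1 := by fun_prop
  have hsnd : Continuous fun l : {l : Quot (rel p f) × Quot (rel p f) //
      proj p f l.1 = proj p f l.2} => l.1.2 := by fun_prop
  have hχ₁ := (hχ.continuousAt (hV.mem_nhds htU)).comp_of_eq hfst.continuousAt rfl
  have htU' : proj p f t.1.2 ∈ U := t.2 ▸ htU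
  have hχ₂ := (hχ.continuousAt (hV.mem_nhds htU')).comp_of_eq hsnd.continuousAt rfl
  refine (hχ₁.inv.mul hχ₂).congr ?_
  filter_upwards [(hV.preimage hfst).mem_nhds htU]
    with l hl using (diff_eq_localTriv hf hs l.2 hl).symm

end CocycleBundle

open CocycleBundle in
theorem bundle_gerbe_of_cocycle_general
    {M Y₀ Y₁ : Type u} [TopologicalSpace M] [TopologicalSpace Y₀] [TopologicalSpace Y₁]
    (q : Y₀ → M)
    (p : Y₁ → {z : Y₀ × Y₀ // q z.1 = q z.2}) (hp : Continuous p)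
    (hp_sec : ∀ z, ∃ U : Set {z : Y₀ × Y₀ // q z.1 = q z.2},
      IsOpen U ∧ z ∈ U ∧ ∃ s : U → Y₁, Continuous s ∧ ∀ x : U, p (s x) = x)
    (f : {uv : Y₁ × Y₁ // p uv.1 = p uv.2} → Circle)
    (hf : Continuous f)
    (hcocycle : ∀ (u v w : Y₁) (huv : p u = p v) (hvw : p v = p w),
      f ⟨(u, v), huv⟩ * f ⟨(v, w), hvw⟩ = f ⟨(u, w), huv.trans hvw⟩) :
    ∃ (π : Quot (fun a b : Y₁ × Circle =>
          ∃ h : p a.1 = p b.1, a.2 = b.2 * f ⟨(a.1, b.1), h⟩) →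
        {z : Y₀ × Y₀ // q z.1 = q z.2})
      (act : Quot (fun a b : Y₁ × Circle =>
          ∃ h : p a.1 = p b.1, a.2 = b.2 * f ⟨(a.1, b.1), h⟩) → Circle →
        Quot (fun a b : Y₁ × Circle =>
          ∃ h : p a.1 = p b.1, a.2 = b.2 * f ⟨(a.1, b.1), h⟩)),
      (∀ y : Y₁ × Circle, π (Quot.mk _ y) = p y.1) ∧
      Continuous π ∧
      (∀ (y : Y₁ × Circle) (g : Circle),
        act (Quot.mk _ y) g = Quot.mk _ (y.1, y.2 * g)) ∧
      Continuous (fun s : (Quot (fun a b : Y₁ × Circle =>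
          ∃ h : p a.1 = p b.1, a.2 = b.2 * f ⟨(a.1, b.1), h⟩)) × Circle =>
        act s.1 s.2) ∧
      (∀ l, act l 1 = l) ∧ (∀ l g h, act (act l g) h = act l (g * h)) ∧
      (∀ l g, π (act l g) = π l) ∧
      -- strong freeness: a continuous equivariant "difference" function
      (∃ d : {y : (Quot (fun a b : Y₁ × Circle =>
            ∃ h : p a.1 = p b.1, a.2 = b.2 * f ⟨(a.1, b.1), h⟩)) ×
          (Quot (fun a b : Y₁ × Circle =>
            ∃ h : p a.1 = p b.1, a.2 = b.2 * f ⟨(a.1, b.1), h⟩)) // π y.1 = π y.2} →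
          Circle, Continuous d ∧
        (∀ y, act y.1.1 (d y) = y.1.2) ∧
        (∀ l g, ∀ h : π l = π (act l g), d ⟨(l, act l g), h⟩ = g)) ∧
      -- local sections
      (∀ z, ∃ U : Set {z : Y₀ × Y₀ // q z.1 = q z.2},
        IsOpen U ∧ z ∈ U ∧ ∃ s : U → Quot (fun a b : Y₁ × Circle =>
          ∃ h : p a.1 = p b.1, a.2 = b.2 * f ⟨(a.1, b.1), h⟩),
          Continuous s ∧ ∀ x : U, π (s x) = x) := by
  refine ⟨proj p f, act p f, fun _ => rfl, continuous_proj p f hp, fun _ _ => rfl,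
    continuous_act p f, act_one p f, act_act p f, proj_act p f,
    ⟨fun l => diff hcocycle l.1.1 l.1.2, continuous_diff hp hf hcocycle hp_sec,
      fun l => act_diff hcocycle l.2, fun l g _ => diff_act hcocycle l g⟩, fun z => ?_⟩
  obtain ⟨U, hU, hzU, s, hsc, hs⟩ := hp_sec z
  exact ⟨U, hU, hzU, localSection f s, continuous_localSection hsc, proj_localSection hs⟩

/-- **From a cocycle to a bundle gerbe line bundle.**
Let `q : Y₀ → M` be a continuous surjection, `Z = Y₀ ×_M Y₀ = Y₀^{[2]}` and let
`p : Y₁ → Z` be a continuous surjection admitting local sections.  Let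
`f : Y₁ ×_Z Y₁ → S¹` be continuous, satisfying the cocycle condition
`f(u,v) · f(v,w) = f(u,w)` for all `u, v, w` lying over the same point of `Z`.
Then the quotient `L` of `Y₁ × S¹` by the relation `(u, ξ) ∼ (v, η) ↔ ξ = η · f(u,v)`
is a principal `S¹`-bundle over `Z`:  the evident circle action on `L` is continuous,
strongly free (there is a continuous "difference" function), and the projection
`L → Z` admits local sections. -/
theorem bundle_gerbe_of_cocycle
    {M Y₀ Y₁ : Type u} [TopologicalSpace M] [TopologicalSpace Y₀] [TopologicalSpace Y₁]
    (q : Y₀ → M) (hq : Continuous q) (hq_surj : Function.Surjective q)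
    (p : Y₁ → {z : Y₀ × Y₀ // q z.1 = q z.2}) (hp : Continuous p)
    (hp_surj : Function.Surjective p)
    (hp_sec : ∀ z, ∃ U : Set {z : Y₀ × Y₀ // q z.1 = q z.2},
      IsOpen U ∧ z ∈ U ∧ ∃ s : U → Y₁, Continuous s ∧ ∀ x : U, p (s x) = x)
    (f : {uv : Y₁ × Y₁ // p uv.1 = p uv.2} → Circle)
    (hf : Continuous f)
    (hcocycle : ∀ (u v w : Y₁) (huv : p u = p v) (hvw : p v = p w),
      f ⟨(u, v), huv⟩ * f ⟨(v, w), hvw⟩ = f ⟨(u, w), huv.trans hvw⟩) :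
    ∃ (π : Quot (fun a b : Y₁ × Circle =>
          ∃ h : p a.1 = p b.1, a.2 = b.2 * f ⟨(a.1, b.1), h⟩) →
        {z : Y₀ × Y₀ // q z.1 = q z.2})
      (act : Quot (fun a b : Y₁ × Circle =>
          ∃ h : p a.1 = p b.1, a.2 = b.2 * f ⟨(a.1, b.1), h⟩) → Circle →
        Quot (fun a b : Y₁ × Circle =>
          ∃ h : p a.1 = p b.1, a.2 = b.2 * f ⟨(a.1, b.1), h⟩)),
      (∀ y : Y₁ × Circle, π (Quot.mk _ y) = p y.1) ∧
      Continuous π ∧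
      (∀ (y : Y₁ × Circle) (g : Circle),
        act (Quot.mk _ y) g = Quot.mk _ (y.1, y.2 * g)) ∧
      Continuous (fun s : (Quot (fun a b : Y₁ × Circle =>
          ∃ h : p a.1 = p b.1, a.2 = b.2 * f ⟨(a.1, b.1), h⟩)) × Circle =>
        act s.1 s.2) ∧
      (∀ l, act l 1 = l) ∧ (∀ l g h, act (act l g) h = act l (g * h)) ∧
      (∀ l g, π (act l g) = π l) ∧
      -- strong freeness: a continuous equivariant "difference" function
      (∃ d : {y : (Quot (fun a b : Y₁ × Circle =>
            ∃ h : p a.1 = p b.1, a.2 = b.2 * f ⟨(a.1, b.1), h⟩)) ×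
          (Quot (fun a b : Y₁ × Circle =>
            ∃ h : p a.1 = p b.1, a.2 = b.2 * f ⟨(a.1, b.1), h⟩)) // π y.1 = π y.2} →
          Circle, Continuous d ∧
        (∀ y, act y.1.1 (d y) = y.1.2) ∧
        (∀ l g, ∀ h : π l = π (act l g), d ⟨(l, act l g), h⟩ = g)) ∧
      -- local sections
      (∀ z, ∃ U : Set {z : Y₀ × Y₀ // q z.1 = q z.2},
        IsOpen U ∧ z ∈ U ∧ ∃ s : U → Quot (fun a b : Y₁ × Circle =>
          ∃ h : p a.1 = p b.1, a.2 = b.2 * f ⟨(a.1, b.1), h⟩),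
          Continuous s ∧ ∀ x : U, π (s x) = x) :=
  bundle_gerbe_of_cocycle_general q p hp hp_sec f hf hcocycle
end

section
/- Let π : P → M be a numerable principal G-bundle of topological spaces and A ⊆ M a closed subspace such that (M, A) is an NDR pair. Then (P, P|_A) is a G-equivariant NDR pair: there exist a G-invariant map ũ : P → [0,1] with P|_A = ũ⁻¹(0) and a G-equivariant homotopy h̃ : P × I → P with h̃₀ = id, h̃ₜ|_{P|_A} = id for all t, and h̃₁(p) ∈ P|_A whenever ũ(p) < 1. -/
universe u

open unitInterval

variable (G : Type u) [Group G] [TopologicalSpace G] [IsTopologicalGroup G]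

/-- A principal `G`-bundle structure: a continuous map `proj : P → M` with a continuous,
strongly free `G`-action over `M`, admitting local sections. -/
structure PrincipalBundle (M P : Type u) [TopologicalSpace M] [TopologicalSpace P] where
  proj : P → M
  proj_continuous : Continuous proj
  smul : P → G → P
  smul_continuous : Continuous fun q : P × G => smul q.1 q.2
  smul_one : ∀ p, smul p 1 = p
  smul_mul : ∀ p g h, smul (smul p g) h = smul p (g * h)
  proj_smul : ∀ p g, proj (smul p g) = proj p
  stronglyFree : IsHomeomorph fun q : P × G =>
    (⟨(q.1, smul q.1 q.2), (proj_smul q.1 q.2).symm⟩ :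
      {y : P × P // proj y.1 = proj y.2})
  local_sections : ∀ m : M, ∃ U : Set M, IsOpen U ∧ m ∈ U ∧
    ∃ s : U → P, Continuous s ∧ ∀ x : U, proj (s x) = x

/-- A principal bundle is numerable if it admits local sections (equivalently, local
trivializations) over a numerable open cover, i.e. an open cover admitting a subordinate
partition of unity. -/
def PrincipalBundle.Numerable {M P : Type u} [TopologicalSpace M] [TopologicalSpace P]
    (B : PrincipalBundle G M P) : Prop :=
  ∃ (ι : Type u) (V : ι → Set M), (∀ i, IsOpen (V i)) ∧ (⋃ i, V i) = Set.univ ∧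
    (∃ pou : PartitionOfUnity ι M, pou.IsSubordinate V) ∧
    ∀ i, ∃ s : V i → P, Continuous s ∧ ∀ x : V i, B.proj (s x) = x

/-!
The homotopy `h` is lifted chart by chart. If, for some `n`, the `l`-th of `n + 1` equal pieces of
every path `h (x, ·)` with `x ∈ U` stays in a set over which `P` has a section, these sections
glue along consecutive pieces (corrected by the translation function `P ×_M P → G`) to a lift of
`h` over `U`, constant in time over `A` because `h` is. Milnor's trick turns the locally finite
families of such sets `U` into a countable partition of unity `ρ` subordinate to open sets
`V j` carrying such lifts. An equivariant lift defined up to time `ρ 0 + ⋯ + ρ (j - 1)` is then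
advanced to time `ρ 0 + ⋯ + ρ j` by translating the lift over `V j` onto it; by local
finiteness these lifts stabilise near every point. The NDR function on `P` is `u ∘ π`.
-/

open Set Filter Topology Function

section LocallyFinite

variable {ι X : Type*} [TopologicalSpace X]

theorem LocallyFinite.image_fst {K : Type*} [TopologicalSpace K] [CompactSpace K]
    {f : ι → Set (X × K)} (hf : LocallyFinite f) : LocallyFinite fun i => Prod.fst '' f i := by
  intro x
  choose U hU hUf using hf
  obtain ⟨t, -, hcover⟩ := (isCompact_singleton.prod isCompact_univ :
      IsCompact ({x} ×ˢ (univ : Set K))).elim_nhds_subcover (fun z => interior (U z))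
    fun z _ => interior_mem_nhds.2 (hU z)
  set W := ⋃ z ∈ t, interior (U z)
  have hW : IsOpen W := isOpen_biUnion fun _ _ => isOpen_interior
  refine ⟨(Prod.fst '' Wᶜ)ᶜ,
    (isClosedMap_fst_of_compactSpace _ hW.isClosed_compl).isOpen_compl.mem_nhds ?_, ?_⟩
  · rintro ⟨⟨y, k⟩, hyk, rfl⟩
    exact hyk (hcover ⟨rfl, trivial⟩)
  · refine (t.finite_toSet.biUnion fun z _ => hUf z).subset ?_
    rintro i ⟨_, ⟨⟨y, k⟩, hyk, rfl⟩, hy⟩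
    have hykW : (y, k) ∈ W := by_contra fun h => hy ⟨_, h, rfl⟩
    obtain ⟨z, hz, hzW⟩ := mem_iUnion₂.1 hykW
    exact mem_biUnion hz ⟨_, hyk, interior_subset hzW⟩

theorem LocallyFinite.iInter_comp {κ : Type*} [Finite κ] {f : ι → Set X}
    (hf : LocallyFinite f) : LocallyFinite fun c : κ → ι => ⋂ l, f (c l) := by
  intro x
  obtain ⟨N, hN, hfin⟩ := hf x
  refine ⟨N, hN, (Set.Finite.pi' fun _ => hfin).subset ?_⟩
  rintro c ⟨y, hy, hyN⟩ l
  exact ⟨y, mem_iInter.1 hy l, hyN⟩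

theorem LocallyFinite.biInter_finset {f : ι → Set X} (hf : LocallyFinite f) :
    LocallyFinite fun S : Finset ι => ⋂ i ∈ S, f i := by
  intro x
  obtain ⟨N, hN, hfin⟩ := hf x
  refine ⟨N, hN, (hfin.finite_subsets.preimage Finset.coe_injective.injOn).subset ?_⟩
  rintro S ⟨y, hy, hyN⟩ i hi
  exact ⟨y, mem_iInter₂.1 hy i hi, hyN⟩

end LocallyFinite

theorem bddAbove_range_of_le_pow {X : Type*} {g : ℕ → X → ℝ}
    (hle : ∀ m x, g m x ≤ 2⁻¹ ^ m) (x : X) : BddAbove (range fun m => g m x) :=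
  ⟨1, forall_mem_range.2 fun m => (hle m x).trans (pow_le_one₀ (by norm_num) (by norm_num))⟩

section CountableCover

variable {X : Type*} [TopologicalSpace X] {g : ℕ → X → ℝ}

theorem continuous_iSup_of_le_pow (hg : ∀ m, Continuous (g m)) (hg0 : ∀ m x, 0 ≤ g m x)
    (hle : ∀ m x, g m x ≤ 2⁻¹ ^ m) : Continuous fun x => ⨆ m, g m x := by
  set G : ℕ → X → ℝ := fun N x => (Finset.range (N + 1)).sup' Finset.nonempty_range_add_one
    fun m => g m x
  have hG_le : ∀ N x, G N x ≤ ⨆ m, g m x :=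
    fun N x => Finset.sup'_le _ _ fun m _ => le_ciSup (bddAbove_range_of_le_pow hle x) m
  have hle_G : ∀ N x, (⨆ m, g m x) ≤ G N x + 2⁻¹ ^ N := by
    refine fun N x => ciSup_le fun m => ?_
    rcases le_or_gt m N with hm | hm
    · have := Finset.le_sup' (fun m => g m x) (Finset.mem_range_succ_iff.2 hm)
      linarith [pow_pos (by norm_num : (0 : ℝ) < 2⁻¹) N]
    · have h0 : 0 ≤ G N x := (hg0 0 x).trans (Finset.le_sup' (fun m => g m x) (by simp))
      linarith [hle m x,
        pow_le_pow_of_le_one (by norm_num : (0 : ℝ) ≤ 2⁻¹) (by norm_num) hm.le]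
  refine TendstoUniformly.continuous (F := G) (p := atTop) ?_
    (Eventually.of_forall fun N => Continuous.finset_sup'_apply _ fun m _ => hg m).frequently
  rw [Metric.tendstoUniformly_iff]
  intro ε hε
  filter_upwards [(tendsto_pow_atTop_nhds_zero_of_lt_one (by norm_num : (0 : ℝ) ≤ 2⁻¹)
    (by norm_num)).eventually (gt_mem_nhds hε)] with N hN x
  rw [Real.dist_eq, abs_lt]
  constructor <;> linarith [hG_le N x, hle_G N x]

theorem exists_eventually_forall_lt_mul_iSup (hg : ∀ m, Continuous (g m))
    (hg0 : ∀ m x, 0 ≤ g m x) (hle : ∀ m x, g m x ≤ 2⁻¹ ^ m) {x : X}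
    (hx : 0 < ⨆ m, g m x) {c : ℝ} (hc : 0 < c) :
    ∃ N, ∀ᶠ y in 𝓝 x, ∀ m ≥ N, g m y < c * ⨆ n, g n y := by
  obtain ⟨N, hN⟩ := exists_pow_lt_of_lt_one (by positivity : 0 < c * (⨆ m, g m x) / 2)
    (by norm_num : (2⁻¹ : ℝ) < 1)
  have hU : IsOpen {y | (⨆ m, g m x) < 2 * ⨆ m, g m y} :=
    isOpen_lt continuous_const (continuous_const.mul (continuous_iSup_of_le_pow hg hg0 hle))
  refine ⟨N, eventually_of_mem (hU.mem_nhds (show (⨆ m, g m x) < 2 * ⨆ m, g m x by linarith))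
    fun y hy m hm => ?_⟩
  have hy : (⨆ m, g m x) < 2 * ⨆ m, g m y := hy
  nlinarith [hle m y, pow_le_pow_of_le_one (by norm_num : (0 : ℝ) ≤ 2⁻¹) (by norm_num) hm]

theorem exists_partitionOfUnity_isSubordinate_of_nat {f : ℕ → X → ℝ}
    (hf : ∀ m, Continuous (f m)) (hf0 : ∀ m x, 0 ≤ f m x) (hcover : ∀ x, ∃ m, 0 < f m x) :
    ∃ ρ : PartitionOfUnity ℕ X, ρ.IsSubordinate fun m => {x | 0 < f m x} := by
  set g : ℕ → X → ℝ := fun m x => min (f m x) (2⁻¹ ^ m)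
  have hg : ∀ m, Continuous (g m) := fun m => (hf m).min continuous_const
  have hg0 : ∀ m x, 0 ≤ g m x := fun m x => le_min (hf0 m x) (by positivity)
  have hle : ∀ m x, g m x ≤ 2⁻¹ ^ m := fun m x => min_le_right _ _
  set S : X → ℝ := fun x => ⨆ m, g m x
  have hS : Continuous S := continuous_iSup_of_le_pow hg hg0 hle
  have hS_pos : ∀ x, 0 < S x := fun x => by
    obtain ⟨m, hm⟩ := hcover x
    exact (lt_min hm (by positivity)).trans_le (le_ciSup (bddAbove_range_of_le_pow hle x) m)
  -- bump functions with `b m = 1` where `3 g m > 2 S` and `b m = 0` where `3 g m ≤ S`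
  set b : ℕ → X → ℝ := fun m x => min 1 (max 0 (3 * g m x / S x - 1))
  have hb : ∀ m, Continuous (b m) := fun m => continuous_const.min (continuous_const.max
    (((continuous_const.mul (hg m)).div hS fun x => (hS_pos x).ne').sub continuous_const))
  have hb_zero : ∀ m x, 3 * g m x ≤ S x → b m x = 0 := fun m x h => by
    have : 3 * g m x / S x ≤ 1 := (div_le_one (hS_pos x)).2 h
    simp only [b, max_eq_left (by linarith : 3 * g m x / S x - 1 ≤ 0), min_eq_right zero_le_one]
  let β : BumpCovering ℕ X :=
    { toFun := fun m => ⟨b m, hb m⟩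
      locallyFinite' := fun x => by
        obtain ⟨N, hN⟩ := exists_eventually_forall_lt_mul_iSup hg hg0 hle (hS_pos x)
          (by norm_num : (0 : ℝ) < 3⁻¹)
        refine ⟨_, hN, (finite_Iio N).subset fun m ⟨y, hy, hyN⟩ => ?_⟩
        by_contra hm
        exact hy (hb_zero m y (by linarith [hyN m (not_lt.1 hm)]))
      nonneg' := fun m x => le_min zero_le_one (le_max_left _ _)
      le_one' := fun m x => min_le_left _ _
      eventuallyEq_one' := fun x _ => by
        obtain ⟨m, hm⟩ := exists_lt_of_lt_ciSup (by linarith [hS_pos x] : 2 / 3 * S x < S x)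
        refine ⟨m, eventually_of_mem ((isOpen_lt (continuous_const.mul hS)
          (continuous_const.mul (hg m))).mem_nhds (show 2 * S x < 3 * g m x by linarith))
          fun y (hy : 2 * S y < 3 * g m y) => ?_⟩
        have : 2 < 3 * g m y / S y := (lt_div_iff₀ (hS_pos y)).2 hy
        simp only [ContinuousMap.coe_mk, b, Pi.one_apply,
          max_eq_right (by linarith : (0 : ℝ) ≤ 3 * g m y / S y - 1),
          min_eq_left (by linarith : (1 : ℝ) ≤ 3 * g m y / S y - 1)] }
  refine ⟨β.toPartitionOfUnity, BumpCovering.IsSubordinate.toPartitionOfUnity fun m => ?_⟩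
  have hsupp : support (b m) ⊆ {x | S x ≤ 3 * g m x} :=
    fun x hx => not_lt.1 fun h => hx (hb_zero m x h.le)
  refine (closure_minimal hsupp (isClosed_le hS (continuous_const.mul (hg m)))).trans
    fun x (hx : S x ≤ 3 * g m x) => ?_
  exact (by linarith [hS_pos x] : 0 < g m x).trans_le (min_le_left _ _)

end CountableCover

theorem continuous_dite_of_isOpen {X Y : Type*} [TopologicalSpace X] [TopologicalSpace Y]
    {O₁ O₂ : Set X} [DecidablePred (· ∈ O₁)] (h₁ : IsOpen O₁) (h₂ : IsOpen O₂)
    (hcover : ∀ x, x ∈ O₁ ∨ x ∈ O₂)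
    {f : O₁ → Y} (hf : Continuous f) {g : X → Y} (hg : Continuous g)
    (hfg : ∀ x (hx : x ∈ O₁), x ∈ O₂ → f ⟨x, hx⟩ = g x) :
    Continuous fun x => if hx : x ∈ O₁ then f ⟨x, hx⟩ else g x := by
  refine continuousOn_univ.1 (((continuousOn_iff_continuous_domRestrict.2 ?_).union_of_isOpen
    (hg.continuousOn.congr fun x hx => ?_) h₁ h₂).mono fun x _ => hcover x)
  · convert hf using 1
    exact funext fun x => dif_pos x.2
  · split_ifs with hx'
    exacts [hfg x hx' hx, rfl]

theorem ContinuousMap.exists_eventually_eq_of_locallyFinite {X Y : Type*} [TopologicalSpace X]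
    [TopologicalSpace Y] (F : ℕ → C(X, Y))
    (hF : LocallyFinite fun n => {x | F (n + 1) x ≠ F n x}) :
    ∃ F' : C(X, Y), ∀ x, ∀ᶠ n in atTop, F n x = F' x := by
  obtain ⟨f, hf⟩ := hF.exists_forall_eventually_atTop_eventuallyEq (f := fun n => ⇑(F n))
  refine ⟨⟨f, continuous_iff_continuousAt.2 fun x => ?_⟩,
    fun x => (hf x).mono fun n hn => hn.eq_of_nhds⟩
  obtain ⟨n, hn⟩ := (hf x).exists
  exact (F n).continuous.continuousAt.congr hn

namespace PartitionOfUnity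

variable {X : Type*} [TopologicalSpace X] (ρ : PartitionOfUnity ℕ X)

noncomputable def partialSum (j : ℕ) : C(X, I) :=
  ⟨fun x => ⟨∑ m ∈ Finset.range j, ρ m x, Finset.sum_nonneg fun m _ => ρ.nonneg m x,
    (Finset.sum_le_sum_of_subset_of_nonneg Finset.subset_union_left fun m _ _ =>
      ρ.nonneg m x).trans (ρ.sum_finsupport' (mem_univ x) Finset.subset_union_right).le⟩,
    by fun_prop⟩

@[simp]
theorem coe_partialSum_apply (j : ℕ) (x : X) :
    (ρ.partialSum j x : ℝ) = ∑ m ∈ Finset.range j, ρ m x :=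
  rfl

theorem partialSum_zero : ρ.partialSum 0 = 0 := by
  ext x
  simp

theorem eventually_partialSum_eq_one (x : X) : ∀ᶠ j in atTop, ρ.partialSum j x = 1 := by
  obtain ⟨N, hN⟩ := (ρ.finsupport x).exists_nat_subset_range
  exact eventually_atTop.2 ⟨N, fun j hj => Subtype.ext
    (ρ.sum_finsupport' (mem_univ x) (hN.trans (Finset.range_subset_range.2 hj)))⟩

theorem setOf_partialSum_ne_subset (j : ℕ) :
    {x | ρ.partialSum j x ≠ ρ.partialSum (j + 1) x} ⊆ support (ρ j) := fun x h hρ =>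
  h (Subtype.ext (by simp [Finset.sum_range_succ, hρ]))

end PartitionOfUnity

section Disjointification

variable {X κ : Type*} {w : κ → X → ℝ}

open scoped Classical in
noncomputable def disjointPiece (w : κ → X → ℝ) (S : Finset κ) (hS : S.Nonempty) (x : X) :
    ℝ :=
  max 0 (S.inf' hS (w · x) - ∑ᶠ c, if c ∈ S then 0 else w c x)

theorem continuous_disjointPiece [TopologicalSpace X] (hw : ∀ c, Continuous (w c))
    (hwf : LocallyFinite fun c => support (w c)) (S : Finset κ) (hS : S.Nonempty) :
    Continuous (disjointPiece w S hS) := by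
  refine continuous_const.max ((Continuous.finset_inf'_apply hS fun c _ => hw c).sub
    (continuous_finsum (fun c => ?_) (hwf.subset fun c x hx => ?_)))
  · split_ifs
    exacts [continuous_const, hw c]
  · split_ifs at hx
    exacts [absurd rfl hx, hx]

open scoped Classical in
theorem le_finsum_ite_of_notMem [TopologicalSpace X] (hw0 : ∀ c x, 0 ≤ w c x)
    (hwf : LocallyFinite fun c => support (w c)) {S : Finset κ} {c : κ} (hc : c ∉ S) (x : X) :
    w c x ≤ ∑ᶠ c, if c ∈ S then 0 else w c x := by
  have := single_le_finsum (f := fun c => if c ∈ S then 0 else w c x) c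
    ((hwf.point_finite x).subset ?_) ?_
  · rwa [if_neg hc] at this
  · intro c' hc' h
    exact hc' (by simp [h])
  · intro c'
    split_ifs
    exacts [le_rfl, hw0 c' x]

open scoped Classical in
theorem finsum_ite_lt_of_disjointPiece_pos {S : Finset κ} {hS : S.Nonempty} {x : X}
    (hx : 0 < disjointPiece w S hS x) {c : κ} (hc : c ∈ S) :
    ∑ᶠ c, (if c ∈ S then 0 else w c x) < w c x := by
  have := (lt_max_iff.1 hx).resolve_left (lt_irrefl 0)
  linarith [S.inf'_le (w · x) hc]

theorem pos_of_disjointPiece_pos (hw0 : ∀ c x, 0 ≤ w c x) {S : Finset κ} {hS : S.Nonempty}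
    {x : X} (hx : 0 < disjointPiece w S hS x) {c : κ} (hc : c ∈ S) : 0 < w c x := by
  classical
  refine (finsum_nonneg fun c' => ?_).trans_lt (finsum_ite_lt_of_disjointPiece_pos hx hc)
  split_ifs
  exacts [le_rfl, hw0 c' x]

theorem eq_of_disjointPiece_pos [TopologicalSpace X] (hw0 : ∀ c x, 0 ≤ w c x)
    (hwf : LocallyFinite fun c => support (w c)) {S S' : Finset κ} {hS : S.Nonempty}
    {hS' : S'.Nonempty} {x : X} (hcard : S.card = S'.card) (hx : 0 < disjointPiece w S hS x)
    (hx' : 0 < disjointPiece w S' hS' x) : S = S' := by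
  by_contra hne
  obtain ⟨c, hcS, hcS'⟩ :=
    Finset.not_subset.1 fun h => hne (Finset.eq_of_subset_of_card_le h hcard.ge)
  obtain ⟨c', hc'S', hc'S⟩ :=
    Finset.not_subset.1 fun h => hne (Finset.eq_of_subset_of_card_le h hcard.le).symm
  linarith [le_finsum_ite_of_notMem hw0 hwf hcS' x, le_finsum_ite_of_notMem hw0 hwf hc'S x,
    finsum_ite_lt_of_disjointPiece_pos hx hcS, finsum_ite_lt_of_disjointPiece_pos hx' hc'S']

theorem disjointPiece_pos [TopologicalSpace X] (hw0 : ∀ c x, 0 ≤ w c x)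
    (hwf : LocallyFinite fun c => support (w c)) {x : X}
    (hx : (hwf.point_finite x).toFinset.Nonempty) : 0 < disjointPiece w _ hx x := by
  classical
  have hrest : ∑ᶠ c, (if c ∈ (hwf.point_finite x).toFinset then 0 else w c x) = 0 :=
    finsum_eq_zero_of_forall_eq_zero fun c => by
      split_ifs with hc
      exacts [rfl, by simpa using hc]
  rw [disjointPiece, hrest, sub_zero]
  refine lt_max_of_lt_right ((Finset.lt_inf'_iff _).2 fun c hc => ?_)
  exact (hw0 c x).lt_of_ne (Ne.symm (by simpa using hc))

/-- Milnor's trick: for each `s`, the sets `{disjointPiece w S > 0}` with `S.card = s + 1` are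
pairwise disjoint, so their union is a single cozero set on which `Φ` holds. -/
theorem exists_nat_cozero_cover_of_locallyFinite [TopologicalSpace X] (Φ : Set X → Prop)
    (hΦ_mono : ∀ ⦃U V⦄, U ⊆ V → Φ V → Φ U)
    (hΦ_sUnion : ∀ 𝒰 : Set (Set X), (∀ U ∈ 𝒰, IsOpen U ∧ Φ U) →
      𝒰.PairwiseDisjoint id → Φ (⋃₀ 𝒰))
    (hw : ∀ c, Continuous (w c)) (hw0 : ∀ c x, 0 ≤ w c x)
    (hwf : LocallyFinite fun c => support (w c)) (hwΦ : ∀ c, Φ (support (w c))) :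
    ∃ f : ℕ → X → ℝ, (∀ s, Continuous (f s)) ∧ (∀ s x, 0 ≤ f s x) ∧
      (∀ s, Φ {x | 0 < f s x}) ∧ ∀ x c, 0 < w c x → ∃ s, 0 < f s x := by
  have hne : ∀ {s} (S : {S : Finset κ // S.card = s + 1}), S.1.Nonempty :=
    fun S => Finset.card_pos.1 (by omega)
  set d : ∀ s, {S : Finset κ // S.card = s + 1} → X → ℝ :=
    fun s S => disjointPiece w S.1 (hne S)
  have hd : ∀ s S, Continuous (d s S) := fun s S => continuous_disjointPiece hw hwf _ _
  have hd0 : ∀ s S x, 0 ≤ d s S x := fun s S x => le_max_left _ _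
  have hdw : ∀ s S, ∀ c ∈ S.1, support (d s S) ⊆ support (w c) := fun s S c hc x hx =>
    (pos_of_disjointPiece_pos hw0 ((hd0 s S x).lt_of_ne' hx) hc).ne'
  have hdf : ∀ s, LocallyFinite fun S => support (d s S) := fun s =>
    (hwf.biInter_finset.comp_injective Subtype.val_injective).subset fun S =>
      subset_iInter₂ fun c hc => hdw s S c hc
  refine ⟨fun s x => ∑ᶠ S, d s S x, fun s => continuous_finsum (hd s) (hdf s),
    fun s x => finsum_nonneg fun S => hd0 s S x, fun s => ?_, fun x c hc => ?_⟩
  · refine hΦ_mono (fun x hx => ?_) (hΦ_sUnion (range fun S => {x | 0 < d s S x}) ?_ ?_)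
    · by_contra h
      have hzero : ∑ᶠ S, d s S x = 0 := finsum_eq_zero_of_forall_eq_zero fun S =>
        (hd0 s S x).antisymm' (not_lt.1 fun hS => h ⟨_, mem_range_self S, hS⟩)
      exact (show (0 : ℝ) < ∑ᶠ S, d s S x from hx).ne' hzero
    · rintro _ ⟨S, rfl⟩
      exact ⟨isOpen_lt continuous_const (hd s S), hΦ_mono (fun x hx => hdw s S _
        (hne S).choose_spec (ne_of_gt hx)) (hwΦ _)⟩
    · rintro _ ⟨S, rfl⟩ _ ⟨S', rfl⟩ hSS'
      refine disjoint_left.2 fun x hx hx' => hSS' ?_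
      rw [Subtype.ext (eq_of_disjointPiece_pos hw0 hwf (S.2.trans S'.2.symm) hx hx')]
  · have hS : (hwf.point_finite x).toFinset.Nonempty := ⟨c, by simpa using hc.ne'⟩
    obtain ⟨s, hs⟩ : ∃ s, (hwf.point_finite x).toFinset.card = s + 1 :=
      ⟨_, (Nat.succ_pred_eq_of_pos hS.card_pos).symm⟩
    exact ⟨s, (disjointPiece_pos hw0 hwf hS).trans_le (single_le_finsum (f := fun S => d s S x)
      ⟨_, hs⟩ ((hdf s).point_finite x) fun S => hd0 s S x)⟩

end Disjointification

theorem exists_partitionOfUnity_of_locallyFinite_cozero {X : Type*} [TopologicalSpace X]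
    (Φ : Set X → Prop) (hΦ_mono : ∀ ⦃U V⦄, U ⊆ V → Φ V → Φ U)
    (hΦ_sUnion : ∀ 𝒰 : Set (Set X), (∀ U ∈ 𝒰, IsOpen U ∧ Φ U) →
      𝒰.PairwiseDisjoint id → Φ (⋃₀ 𝒰))
    {κ : ℕ → Type*} (w : ∀ n, κ n → X → ℝ) (hw : ∀ n c, Continuous (w n c))
    (hw0 : ∀ n c x, 0 ≤ w n c x) (hwf : ∀ n, LocallyFinite fun c => support (w n c))
    (hwΦ : ∀ n c, Φ (support (w n c))) (hcover : ∀ x, ∃ n c, 0 < w n c x) :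
    ∃ (ρ : PartitionOfUnity ℕ X) (V : ℕ → Set X), (∀ m, IsOpen (V m) ∧ Φ (V m)) ∧
      ρ.IsSubordinate V := by
  choose f hf hf0 hfΦ hfcover using fun n => exists_nat_cozero_cover_of_locallyFinite Φ
    hΦ_mono hΦ_sUnion (hw n) (hw0 n) (hwf n) (hwΦ n)
  obtain ⟨ρ, hρ⟩ := exists_partitionOfUnity_isSubordinate_of_nat
    (f := fun m => f m.unpair.1 m.unpair.2) (fun m => hf _ _) (fun m => hf0 _ _) fun x => by
      obtain ⟨n, c, hc⟩ := hcover x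
      obtain ⟨s, hs⟩ := hfcover n x c hc
      exact ⟨Nat.pair n s, by simpa using hs⟩
  exact ⟨ρ, _, fun m => ⟨isOpen_lt continuous_const (hf _ _), hfΦ _ _⟩, hρ⟩


section PathWeight

variable {X Y ι : Type*} [TopologicalSpace X] [TopologicalSpace Y]

/-- The points `min (l / (n + 1)) 1`. -/
noncomputable def uniformGrid (n : ℕ) : ℕ → I :=
  Set.Icc.addNSMul zero_le_one ((n : ℝ) + 1)⁻¹

theorem monotone_uniformGrid (n : ℕ) : Monotone (uniformGrid n) :=
  Set.Icc.monotone_addNSMul _ (by positivity)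

theorem uniformGrid_zero (n : ℕ) : uniformGrid n 0 = 0 :=
  Subtype.ext (Set.Icc.addNSMul_zero _)

theorem uniformGrid_succ_self (n : ℕ) : uniformGrid n (n + 1) = 1 := by
  rw [uniformGrid, Set.Icc.addNSMul, nsmul_eq_mul, Nat.cast_succ,
    mul_inv_cancel₀ (by positivity), zero_add, Set.projIcc_right]
  rfl

theorem dist_uniformGrid_le (n : ℕ) {l : ℕ} {t : I}
    (ht : t ∈ Icc (uniformGrid n l) (uniformGrid n (l + 1))) :
    dist t (uniformGrid n l) ≤ ((n : ℝ) + 1)⁻¹ :=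
  Set.Icc.abs_sub_addNSMul_le _ (by positivity) l ht

/-- Positive at `x` iff, for every `l`, the path `k (x, ·)` maps the `l`-th interval of the
uniform subdivision of `I` into `n + 1` pieces into the support of `ρ (c l)`. -/
noncomputable def pathWeight (k : C(X × I, Y)) (ρ : ι → Y → ℝ) (n : ℕ)
    (c : Fin (n + 1) → ι) (x : X) : ℝ :=
  ⨅ q : Fin (n + 1) × I,
    ρ (c q.1) (k (x, max (uniformGrid n q.1) (min q.2 (uniformGrid n (q.1 + 1)))))

variable {k : C(X × I, Y)} {ρ : ι → Y → ℝ}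

theorem continuous_pathWeight_uncurry (hρ : ∀ i, Continuous (ρ i)) (n : ℕ)
    (c : Fin (n + 1) → ι) : Continuous fun p : X × (Fin (n + 1) × I) => ρ (c p.2.1)
      (k (p.1, max (uniformGrid n p.2.1) (min p.2.2 (uniformGrid n (p.2.1 + 1))))) := by
  have hρc : Continuous fun p : Fin (n + 1) × Y => ρ (c p.1) p.2 :=
    continuous_prod_of_discrete_left.2 fun l => hρ (c l)
  have hgrid : ∀ j : ℕ, Continuous fun q : Fin (n + 1) × I => uniformGrid n (q.1 + j) :=
    fun j => (continuous_of_discreteTopology (f := fun l : Fin (n + 1) =>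
      uniformGrid n (l + j))).comp continuous_fst
  exact hρc.comp (continuous_snd.fst.prodMk (k.continuous.comp (continuous_fst.prodMk
    (((hgrid 0).comp continuous_snd).max (continuous_snd.snd.min
      ((hgrid 1).comp continuous_snd))))))

theorem continuous_pathWeight (hρ : ∀ i, Continuous (ρ i)) (n : ℕ) (c : Fin (n + 1) → ι) :
    Continuous (pathWeight k ρ n c) := by
  have h := isCompact_univ.continuous_sInf (f := fun x (q : Fin (n + 1) × I) =>
    ρ (c q.1) (k (x, max (uniformGrid n q.1) (min q.2 (uniformGrid n (q.1 + 1))))))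
    (continuous_pathWeight_uncurry hρ n c)
  simp only [image_univ] at h
  exact h

theorem exists_pathWeight_pos (hρ : ∀ i, Continuous (ρ i)) (hcover : ∀ y, ∃ i, 0 < ρ i y)
    (x : X) : ∃ n c, 0 < pathWeight k ρ n c x := by
  obtain ⟨δ, hδ, hball⟩ := lebesgue_number_lemma_of_metric
    (c := fun i => {t : I | 0 < ρ i (k (x, t))}) isCompact_univ
    (fun i => isOpen_lt continuous_const (by fun_prop)) fun t _ => mem_iUnion.2 (hcover (k (x, t)))
  obtain ⟨n, hn⟩ := exists_nat_one_div_lt hδ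
  choose c hc using fun l : Fin (n + 1) => hball (uniformGrid n l) (mem_univ _)
  refine ⟨n, c, ?_⟩
  have hpos : ∀ q : Fin (n + 1) × I, 0 < ρ (c q.1)
      (k (x, max (uniformGrid n q.1) (min q.2 (uniformGrid n (q.1 + 1))))) := fun ⟨l, s⟩ => by
    refine hc l (Metric.mem_ball.2 ((dist_uniformGrid_le n ⟨le_max_left _ _, max_le
      (monotone_uniformGrid n (Nat.le_succ _)) (min_le_right _ _)⟩).trans_lt ?_))
    simpa using hn
  obtain ⟨q₀, -, hq₀⟩ := isCompact_univ.exists_isMinOn univ_nonempty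
    ((continuous_pathWeight_uncurry hρ n c).comp (Continuous.prodMk_right x)).continuousOn
  exact (hpos q₀).trans_le (le_ciInf fun q => hq₀ (mem_univ q))

theorem pathWeight_nonneg (hρ0 : ∀ i y, 0 ≤ ρ i y) (n : ℕ) (c : Fin (n + 1) → ι)
    (x : X) : 0 ≤ pathWeight k ρ n c x :=
  Real.iInf_nonneg fun _ => hρ0 _ _

theorem pos_of_pathWeight_pos (hρ0 : ∀ i y, 0 ≤ ρ i y) {n : ℕ} {c : Fin (n + 1) → ι}
    {x : X}    (hx : 0 < pathWeight k ρ n c x) (l : Fin (n + 1)) {t : I}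
    (ht : t ∈ Icc (uniformGrid n l) (uniformGrid n (l + 1))) : 0 < ρ (c l) (k (x, t)) := by
  refine hx.trans_le ((ciInf_le ⟨0, forall_mem_range.2 fun _ => hρ0 _ _⟩ (l, t)).trans_eq ?_)
  simp only [min_eq_left ht.2, max_eq_right ht.1]

theorem locallyFinite_support_pathWeight (hρ0 : ∀ i y, 0 ≤ ρ i y)
    (hρf : LocallyFinite fun i => support (ρ i)) (n : ℕ) :
    LocallyFinite fun c : Fin (n + 1) → ι => support (pathWeight k ρ n c) := by
  refine ((hρf.preimage_continuous k.continuous).image_fst.iInter_comp).subset fun c x hx => ?_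
  have hpos := (pathWeight_nonneg hρ0 n c x).lt_of_ne' hx
  exact mem_iInter.2 fun l => ⟨(x, _), (pos_of_pathWeight_pos hρ0 hpos l
    ⟨le_rfl, monotone_uniformGrid n (Nat.le_succ _)⟩).ne', rfl⟩

end PathWeight

namespace PrincipalBundle

variable {G M P : Type u} [Group G] [TopologicalSpace G] [TopologicalSpace M] [TopologicalSpace P]
  (B : PrincipalBundle G M P)

noncomputable def translation (y : {y : P × P // B.proj y.1 = B.proj y.2}) : G :=
  ((B.stronglyFree.homeomorph _).symm y).2

theorem continuous_translation : Continuous B.translation :=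
  continuous_snd.comp (B.stronglyFree.homeomorph _).symm.continuous

theorem smul_translation (y : {y : P × P // B.proj y.1 = B.proj y.2}) :
    B.smul y.1.1 (B.translation y) = y.1.2 := by
  have h := congrArg Subtype.val ((B.stronglyFree.homeomorph _).apply_symm_apply y)
  obtain ⟨h₁, h₂⟩ := Prod.ext_iff.1 h
  rw [translation, ← h₁]
  exact h₂

theorem smul_translation_of_eq {a b q : P} (hab : a = b) (h : B.proj a = B.proj q) :
    B.smul b (B.translation ⟨(a, q), h⟩) = q := by
  subst hab
  exact B.smul_translation ⟨(a, q), h⟩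

theorem smul_injective (p : P) : Injective (B.smul p) := fun g g' hg =>
  congrArg Prod.snd (B.stronglyFree.injective (Subtype.ext (Prod.ext rfl hg)) :
    ((p, g) : P × G) = (p, g'))

theorem translation_smul {a b : P} (h : B.proj a = B.proj b) (g : G) :
    B.translation ⟨(a, B.smul b g), (B.proj_smul b g).symm ▸ h⟩ =
      B.translation ⟨(a, b), h⟩ * g :=
  B.smul_injective a (by
    rw [smul_translation_of_eq B rfl, ← B.smul_mul, smul_translation_of_eq B rfl])

variable (k : C(M × I, M)) (A : Set M)

def HasSectionOn (V : Set M) : Prop :=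
  ∃ s : V → P, Continuous s ∧ ∀ x, B.proj (s x) = x

def HasLocalLift (U : Set M) (a b : I) : Prop :=
  ∃ R : C(U × I, P), (∀ x t, B.proj (R (x, t)) = k (x, max a (min t b))) ∧
    ∀ x : U, (x : M) ∈ A → ∀ t, R (x, t) = R (x, 0)

structure IsLiftUpTo (τ : C(M, I)) (F : C(P × I, P)) : Prop where
  proj_apply : ∀ p t, B.proj (F (p, t)) = k (B.proj p, min t (τ (B.proj p)))
  apply_zero : ∀ p, F (p, 0) = p
  apply_smul : ∀ p g t, F (B.smul p g, t) = B.smul (F (p, t)) g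
  apply_of_mem : ∀ p, B.proj p ∈ A → ∀ t, F (p, t) = p

variable {B k A}

theorem HasLocalLift.mono {U V : Set M} {a b : I} (h : B.HasLocalLift k A V a b) (hUV : U ⊆ V) :
    B.HasLocalLift k A U a b := by
  obtain ⟨R, hR, hRA⟩ := h
  exact ⟨R.comp ((ContinuousMap.inclusion hUV).prodMap (ContinuousMap.id I)),
    fun x t => hR _ t, fun x hx t => hRA _ hx t⟩

theorem hasLocalLift_sUnion {𝒰 : Set (Set M)} {a b : I} (h𝒰 : ∀ U ∈ 𝒰, IsOpen U)
    (hdisj : 𝒰.PairwiseDisjoint id) (hlift : ∀ U ∈ 𝒰, B.HasLocalLift k A U a b) :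
    B.HasLocalLift k A (⋃₀ 𝒰) a b := by
  choose R hR hRA using hlift
  let S : 𝒰 → Set (⋃₀ 𝒰 × I) := fun U => {z | (z.1 : M) ∈ U.1}
  let φ : ∀ U : 𝒰, C(S U, P) := fun U =>
    (R U U.2).comp ⟨fun z => (⟨z.1.1, z.2⟩, z.1.2), by fun_prop⟩
  have hφ : ∀ U U' z (hz : z ∈ S U) (hz' : z ∈ S U'),
      φ U ⟨z, hz⟩ = φ U' ⟨z, hz'⟩ := by
    intro U U' z hz hz'
    obtain rfl : U = U' := Subtype.ext (hdisj.elim U.2 U'.2 (not_disjoint_iff.2 ⟨_, hz, hz'⟩))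
    rfl
  have hS : ∀ z, ∃ U, S U ∈ 𝓝 z := fun z => by
    obtain ⟨U, hU, hzU⟩ := z.1.2
    exact ⟨⟨U, hU⟩,
      ((h𝒰 U hU).preimage (continuous_subtype_val.comp continuous_fst)).mem_nhds hzU⟩
  refine ⟨ContinuousMap.liftCover S φ hφ hS, fun x t => ?_, fun x hx t => ?_⟩
  · obtain ⟨U, hU, hxU⟩ := x.2
    rw [ContinuousMap.liftCover_coe (⟨(x, t), hxU⟩ : S ⟨U, hU⟩)]
    exact hR U hU _ t
  · obtain ⟨U, hU, hxU⟩ := x.2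
    rw [ContinuousMap.liftCover_coe (⟨(x, t), hxU⟩ : S ⟨U, hU⟩),
      ContinuousMap.liftCover_coe (⟨(x, 0), hxU⟩ : S ⟨U, hU⟩)]
    exact hRA U hU _ hx t

theorem hasLocalLift_of_hasSectionOn {U V : Set M} {a b : I} (hV : B.HasSectionOn V)
    (hkA : ∀ x ∈ A, ∀ t, k (x, t) = x) (hab : a ≤ b)
    (hUV : ∀ x ∈ U, ∀ t, a ≤ t → t ≤ b → k (x, t) ∈ V) :
    B.HasLocalLift k A U a b := by
  obtain ⟨s, hs, hsp⟩ := hV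
  have hmem : ∀ z : U × I, k (z.1, max a (min z.2 b)) ∈ V := fun z =>
    hUV _ z.1.2 _ (le_max_left _ _) (max_le hab (min_le_right _ _))
  refine ⟨⟨fun z => s ⟨_, hmem z⟩, hs.comp (by fun_prop)⟩, fun x t => hsp _,
    fun x hx t => ?_⟩
  simp only [ContinuousMap.coe_mk, hkA x hx]

theorem HasLocalLift.trans {U : Set M} {a b c : I} (h₁ : B.HasLocalLift k A U a b)
    (h₂ : B.HasLocalLift k A U b c) (hab : a ≤ b) (hbc : b ≤ c) :
    B.HasLocalLift k A U a c := by
  obtain ⟨R₁, hR₁, hR₁A⟩ := h₁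
  obtain ⟨R₂, hR₂, hR₂A⟩ := h₂
  have hb : ∀ x, B.proj (R₂ (x, b)) = B.proj (R₁ (x, b)) := fun x => by
    rw [hR₁, hR₂, min_self, min_eq_left hbc, max_self, max_eq_right hab]
  -- after time `b`, follow `R₂` translated so as to agree with `R₁` at time `b`
  set g : U → G := fun x => B.translation ⟨(R₂ (x, b), R₁ (x, b)), hb x⟩
  have hg : Continuous g := B.continuous_translation.comp (by fun_prop)
  refine ⟨⟨fun z => if z.2 ≤ b then R₁ z else B.smul (R₂ z) (g z.1), ?_⟩, fun x t => ?_,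
    fun x hx t => ?_⟩
  · refine Continuous.if_le R₁.continuous
      (B.smul_continuous.comp (R₂.continuous.prodMk (hg.comp continuous_fst)))
      continuous_snd continuous_const ?_
    rintro ⟨x, t⟩ (rfl : t = b)
    exact (B.smul_translation_of_eq rfl _).symm
  · simp only [ContinuousMap.coe_mk]
    split_ifs with ht
    · rw [hR₁, min_eq_left ht, min_eq_left (ht.trans hbc)]
    · have ht' : b ≤ min t c := le_min (not_le.1 ht).le hbc
      rw [B.proj_smul, hR₂, max_eq_right ht', max_eq_right (hab.trans ht')]
  · simp only [ContinuousMap.coe_mk, if_pos (nonneg' : (0 : I) ≤ b)]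
    split_ifs with ht
    · exact hR₁A x hx t
    · rw [← hR₁A x hx b]
      exact B.smul_translation_of_eq ((hR₂A x hx b).trans (hR₂A x hx t).symm) _

theorem hasLocalLift_of_subdivision {U : Set M} {r : ℕ → I} (hr : Monotone r) (hr0 : r 0 = 0)
    {N : ℕ} (hrN : r (N + 1) = 1) (hkA : ∀ x ∈ A, ∀ t, k (x, t) = x)
    (hsec : ∀ l ≤ N, ∃ V, B.HasSectionOn V ∧
      ∀ x ∈ U, ∀ t, r l ≤ t → t ≤ r (l + 1) → k (x, t) ∈ V) :
    B.HasLocalLift k A U 0 1 := by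
  have hpiece : ∀ l ≤ N, B.HasLocalLift k A U (r l) (r (l + 1)) := fun l hl => by
    obtain ⟨V, hV, hUV⟩ := hsec l hl
    exact hasLocalLift_of_hasSectionOn hV hkA (hr l.le_succ) hUV
  have key : ∀ m ≤ N, B.HasLocalLift k A U 0 (r (m + 1)) := by
    intro m hm
    induction m with
    | zero => exact hr0 ▸ hpiece 0 hm
    | succ m ih => exact (ih (by omega)).trans (hpiece _ hm) nonneg' (hr (by omega))
  exact hrN ▸ key N le_rfl

theorem IsLiftUpTo.of_update {τ τ' : C(M, I)} {F F' : C(P × I, P)} (hF : B.IsLiftUpTo k A τ F)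
    {V : Set M} (hττ' : ∀ x ∉ V, τ x = τ' x) (R : C(V × I, P))
    (hR : ∀ x t, B.proj (R (x, t)) = k (x, t))
    (hRA : ∀ x : V, (x : M) ∈ A → ∀ t, R (x, t) = R (x, 0))
    (hF'F : ∀ z : P × I, τ (B.proj z.1) = τ' (B.proj z.1) → F' z = F z)
    (hF'R : ∀ z (x : V) (hx : (x : M) = B.proj z.1), F' z = B.smul (R (x, min z.2 (τ' x)))
      (B.translation ⟨(R (x, min z.2 (τ x)), F z), by rw [hR, hF.proj_apply, hx]⟩)) :
    B.IsLiftUpTo k A τ' F' := by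
  refine ⟨fun p t => ?_, fun p => ?_, fun p g t => ?_, fun p hp t => ?_⟩
  · by_cases h : B.proj p ∈ V
    · rw [hF'R (p, t) ⟨_, h⟩ rfl, B.proj_smul, hR]
    · rw [hF'F (p, t) (hττ' _ h), hF.proj_apply, hττ' _ h]
  · refine Eq.trans ?_ (hF.apply_zero p)
    by_cases h : B.proj p ∈ V
    · rw [hF'R (p, 0) ⟨_, h⟩ rfl]
      exact B.smul_translation_of_eq (by simp only [min_eq_left nonneg']) _
    · exact hF'F (p, 0) (hττ' _ h)
  · by_cases h : B.proj p ∈ V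
    · rw [hF'R (B.smul p g, t) ⟨_, h⟩ (B.proj_smul p g).symm, hF'R (p, t) ⟨_, h⟩ rfl]
      simp only [hF.apply_smul, B.smul_mul]
      exact congrArg _ (B.translation_smul _ g)
    · rw [hF'F (B.smul p g, t) (hττ' _ (by rwa [B.proj_smul])), hF'F (p, t) (hττ' _ h),
        hF.apply_smul]
  · refine Eq.trans ?_ (hF.apply_of_mem p hp t)
    by_cases h : B.proj p ∈ V
    · rw [hF'R (p, t) ⟨_, h⟩ rfl]
      exact B.smul_translation_of_eq ((hRA _ hp _).trans (hRA _ hp _).symm) _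
    · exact hF'F (p, t) (hττ' _ h)

theorem IsLiftUpTo.exists_update {τ τ' : C(M, I)} {F : C(P × I, P)} (hF : B.IsLiftUpTo k A τ F)
    {V : Set M} (hV : IsOpen V) (hlift : B.HasLocalLift k A V 0 1)
    (hττ' : closure {x | τ x ≠ τ' x} ⊆ V) :
    ∃ F' : C(P × I, P), B.IsLiftUpTo k A τ' F' ∧
      ∀ z : P × I, τ (B.proj z.1) = τ' (B.proj z.1) → F' z = F z := by
  classical
  obtain ⟨R, hR, hRA⟩ := hlift
  simp only [max_eq_right nonneg', min_eq_left le_one'] at hR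
  have hpf : ∀ z : P × I, ∀ hz : B.proj z.1 ∈ V,
      B.proj (R (⟨_, hz⟩, min z.2 (τ (B.proj z.1)))) = B.proj (F z) :=
    fun z hz => by rw [hR, hF.proj_apply]
  -- over `V`, move `F` along the lift `R` from time `τ` to time `τ'`
  let F₁ : {z : P × I | B.proj z.1 ∈ V} → P := fun z =>
    B.smul (R (⟨_, z.2⟩, min z.1.2 (τ' (B.proj z.1.1))))
      (B.translation ⟨(R (⟨_, z.2⟩, min z.1.2 (τ (B.proj z.1.1))), F z.1), hpf z.1 z.2⟩)
  have hF₁ : Continuous F₁ := by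
    have hproj : Continuous fun z : {z : P × I | B.proj z.1 ∈ V} => B.proj z.1.1 :=
      B.proj_continuous.comp (continuous_fst.comp continuous_subtype_val)
    have hRθ : ∀ θ : C(M, I), Continuous fun z : {z : P × I | B.proj z.1 ∈ V} =>
        R (⟨_, z.2⟩, min z.1.2 (θ (B.proj z.1.1))) := fun θ =>
      R.continuous.comp ((hproj.subtype_mk _).prodMk
        ((continuous_snd.comp continuous_subtype_val).min (θ.continuous.comp hproj)))
    exact B.smul_continuous.comp ((hRθ τ').prodMk (B.continuous_translation.comp
      (((hRθ τ).prodMk (F.continuous.comp continuous_subtype_val)).subtype_mk _)))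
  have hF₁F : ∀ z, τ (B.proj z.1.1) = τ' (B.proj z.1.1) → F₁ z = F z.1 := fun z hz =>
    B.smul_translation_of_eq (by rw [hz]) _
  have hτ : ∀ x ∉ closure {x | τ x ≠ τ' x}, τ x = τ' x :=
    fun x hx => not_not.1 fun h => hx (subset_closure h)
  have hF' := continuous_dite_of_isOpen
    (O₂ := {z : P × I | B.proj z.1 ∉ closure {x | τ x ≠ τ' x}})
    (hV.preimage (B.proj_continuous.comp continuous_fst))
    (isClosed_closure.isOpen_compl.preimage (B.proj_continuous.comp continuous_fst))
    (fun z => (em (B.proj z.1 ∈ V)).imp_right fun h h' => h (hττ' h')) hF₁ F.continuous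
    fun z hz hz' => hF₁F ⟨z, hz⟩ (hτ _ hz')
  have hF'F : ∀ z : P × I, τ (B.proj z.1) = τ' (B.proj z.1) →
      (if hz : B.proj z.1 ∈ V then F₁ ⟨z, hz⟩ else F z) = F z := fun z hz => by
    split_ifs with h
    exacts [hF₁F ⟨z, h⟩ hz, rfl]
  refine ⟨⟨_, hF'⟩, hF.of_update (fun x hx => hτ x fun h => hx (hττ' h)) R hR hRA hF'F ?_,
    hF'F⟩
  rintro z ⟨x, hxV⟩ (rfl : x = _)
  exact dif_pos hxV

theorem exists_seq_isLiftUpTo (hk0 : ∀ x, k (x, 0) = x) (ρ : PartitionOfUnity ℕ M)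
    {V : ℕ → Set M} (hV : ∀ m, IsOpen (V m) ∧ B.HasLocalLift k A (V m) 0 1)
    (hρV : ρ.IsSubordinate V) : ∃ F : ℕ → C(P × I, P),
      (∀ j, B.IsLiftUpTo k A (ρ.partialSum j) (F j)) ∧
      ∀ j z, F (j + 1) z ≠ F j z → B.proj z.1 ∈ support (ρ j) := by
  have hstep : ∀ j F, B.IsLiftUpTo k A (ρ.partialSum j) F →
      ∃ F', B.IsLiftUpTo k A (ρ.partialSum (j + 1)) F' ∧ ∀ z : P × I,
        ρ.partialSum j (B.proj z.1) = ρ.partialSum (j + 1) (B.proj z.1) → F' z = F z :=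
    fun j F hF => hF.exists_update (hV j).1 (hV j).2
      ((closure_mono (ρ.setOf_partialSum_ne_subset j)).trans (hρV j))
  choose! update hupdate using hstep
  let F : ℕ → C(P × I, P) := fun j =>
    Nat.rec ⟨Prod.fst, continuous_fst⟩ (fun j F => update j F) j
  have hF : ∀ j, B.IsLiftUpTo k A (ρ.partialSum j) (F j) := by
    intro j
    induction j with
    | zero =>
      refine ⟨fun p t => ?_, fun p => rfl, fun p g t => rfl, fun p _ t => rfl⟩
      rw [ρ.partialSum_zero, ContinuousMap.zero_apply, min_eq_right nonneg', hk0]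
      rfl
    | succ j ih => exact (hupdate j _ ih).1
  exact ⟨F, hF, fun j z hz => ρ.setOf_partialSum_ne_subset j fun h =>
    hz ((hupdate j _ (hF j)).2 z h)⟩

theorem exists_isLiftUpTo_one (hk0 : ∀ x, k (x, 0) = x) (ρ : PartitionOfUnity ℕ M)
    {V : ℕ → Set M} (hV : ∀ m, IsOpen (V m) ∧ B.HasLocalLift k A (V m) 0 1)
    (hρV : ρ.IsSubordinate V) : ∃ F, B.IsLiftUpTo k A 1 F := by
  obtain ⟨F, hF, hFsucc⟩ := exists_seq_isLiftUpTo hk0 ρ hV hρV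
  obtain ⟨F', hF'⟩ := ContinuousMap.exists_eventually_eq_of_locallyFinite F
    ((ρ.locallyFinite.preimage_continuous (B.proj_continuous.comp continuous_fst)).subset
      fun j z hz => hFsucc j z hz)
  refine ⟨F', fun p t => ?_, fun p => ?_, fun p g t => ?_, fun p hp t => ?_⟩
  · obtain ⟨j, hj, hTj⟩ :=
      ((hF' (p, t)).and (ρ.eventually_partialSum_eq_one (B.proj p))).exists
    rw [← hj, (hF j).proj_apply, hTj]
    rfl
  · obtain ⟨j, hj⟩ := (hF' (p, 0)).exists
    rw [← hj, (hF j).apply_zero]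
  · obtain ⟨j, hj, hj'⟩ := ((hF' (B.smul p g, t)).and (hF' (p, t))).exists
    rw [← hj, ← hj', (hF j).apply_smul]
  · obtain ⟨j, hj⟩ := (hF' (p, t)).exists
    rw [← hj, (hF j).apply_of_mem p hp]

theorem exists_partitionOfUnity_hasLocalLift (hnum : B.Numerable G)
    (hkA : ∀ x ∈ A, ∀ t, k (x, t) = x) :
    ∃ (ρ : PartitionOfUnity ℕ M) (V : ℕ → Set M),
      (∀ m, IsOpen (V m) ∧ B.HasLocalLift k A (V m) 0 1) ∧ ρ.IsSubordinate V := by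
  obtain ⟨ι, V, -, -, ⟨ρ, hρV⟩, hsec⟩ := hnum
  refine exists_partitionOfUnity_of_locallyFinite_cozero (fun U => B.HasLocalLift k A U 0 1)
    (fun U V hUV h => h.mono hUV)
    (fun 𝒰 h𝒰 hdisj => hasLocalLift_sUnion (fun U hU => (h𝒰 U hU).1) hdisj
      fun U hU => (h𝒰 U hU).2)
    (pathWeight k fun i => ρ i) (continuous_pathWeight fun i => (ρ i).continuous)
    (pathWeight_nonneg ρ.nonneg) (locallyFinite_support_pathWeight ρ.nonneg ρ.locallyFinite)
    (fun n c => ?_)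
    (exists_pathWeight_pos (fun i => (ρ i).continuous) fun y => ρ.exists_pos (mem_univ y))
  refine hasLocalLift_of_subdivision (monotone_uniformGrid n) (uniformGrid_zero n)
    (uniformGrid_succ_self n) hkA fun l hl => ⟨V (c ⟨l, by omega⟩), hsec _,
      fun x hx t ht₁ ht₂ => hρV _ (subset_closure ?_)⟩
  exact (pos_of_pathWeight_pos ρ.nonneg ((pathWeight_nonneg ρ.nonneg n c x).lt_of_ne' hx)
    ⟨l, by omega⟩ ⟨ht₁, ht₂⟩).ne'

end PrincipalBundle

theorem equivariant_ndr_of_ndr {M P : Type u} [TopologicalSpace M] [TopologicalSpace P]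
    (B : PrincipalBundle G M P) (hnum : B.Numerable G)
    (A : Set M)
    (u : C(M, ℝ)) (h : C(M × unitInterval, M))
    (hu01 : ∀ x, u x ∈ Set.Icc (0 : ℝ) 1)
    (huA : A = u ⁻¹' {0})
    (hh0 : ∀ x, h (x, 0) = x)
    (hhA : ∀ a ∈ A, ∀ t, h (a, t) = a)
    (hh1 : ∀ x, u x < 1 → h (x, 1) ∈ A) :
    ∃ (uP : C(P, ℝ)) (hP : C(P × unitInterval, P)),
      (∀ p, uP p ∈ Set.Icc (0 : ℝ) 1) ∧
      (∀ p g, uP (B.smul p g) = uP p) ∧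
      ((B.proj ⁻¹' A) = uP ⁻¹' {0}) ∧
      (∀ p g t, hP (B.smul p g, t) = B.smul (hP (p, t)) g) ∧
      (∀ p, hP (p, 0) = p) ∧
      (∀ p, B.proj p ∈ A → ∀ t, hP (p, t) = p) ∧
      (∀ p, uP p < 1 → B.proj (hP (p, 1)) ∈ A) := by
  obtain ⟨ρ, _, hV, hρV⟩ := PrincipalBundle.exists_partitionOfUnity_hasLocalLift hnum hhA
  obtain ⟨K, hK⟩ := PrincipalBundle.exists_isLiftUpTo_one hh0 ρ hV hρV
  refine ⟨u.comp ⟨B.proj, B.proj_continuous⟩, K, fun p => hu01 _,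
    fun p g => congrArg u (B.proj_smul p g), by rw [huA]; rfl, hK.apply_smul, hK.apply_zero,
    hK.apply_of_mem, fun p hp => ?_⟩
  rw [hK.proj_apply, ContinuousMap.one_apply, min_self]
  exact hh1 _ hp
end
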